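/- arXiv:2502.08390 — 8 statements merged into one kernel-verified Lean document; each statement's English description precedes it below -/
import Mathlib

section
/- Let L(z) = h(z)·conj(g(z)) be logharmonic in the unit disk 𝔻, where h(z) = z + Σ_{n=2}^∞ a_n z^n and g(z) = 1 + Σ_{n=1}^∞ b_n z^n are analytic on 𝔻 (with the conventions a₀ = 0, a₁ = 1, b₀ = 1). If Λ_{L_{z̄}}(z) = |h'(z)·conj(g'(z))| + |h(z)·conj(g''(z))| ≤ Λ₂ for all z ∈ 𝔻, then for every integer n ≥ 0 one has |Σ_{j=0}^n (j+1)(n−j+1)·a_{j+1}·b_{n−j+1}| ≤ Λ₂. -/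
/-!
On the disk `|h' · g'| = |h' · conj g'| ≤ Λ₂`. The `n`-th Taylor coefficient of `h' · g'` at `0` is
the Cauchy product of the coefficients `(k + 1) a (k + 1)` of `h'` and `(k + 1) b (k + 1)` of `g'`,
which is the sum in question, and Cauchy's estimate on circles of radius `r → 1` bounds it by `Λ₂`.
-/

open Complex Metric

open FormalMultilinearSeries Nat Finset
open scoped NNReal

theorem hasFPowerSeriesOnBall_ofScalars_of_eq_tsum {f : ℂ → ℂ} {a : ℕ → ℂ} {r : ℝ≥0}
    (hr : 0 < r) (hsum : ∀ z ∈ ball (0 : ℂ) r, Summable fun n => a n * z ^ n)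
    (hf : ∀ z ∈ ball (0 : ℂ) r, f z = ∑' n, a n * z ^ n) :
    HasFPowerSeriesOnBall f (ofScalars ℂ a) 0 r where
  r_le := by
    refine ENNReal.le_of_forall_nnreal_lt fun t ht => le_radius_of_summable _ ?_
    have htr : ((t : ℝ) : ℂ) ∈ ball (0 : ℂ) r := by
      simpa [abs_of_nonneg t.coe_nonneg] using ht
    refine (summable_norm_iff.mpr (hsum _ htr)).congr fun n => ?_
    simp [abs_of_nonneg t.coe_nonneg]
  r_pos := by simpa using hr
  hasSum {y} hy := by
    have hy : y ∈ ball (0 : ℂ) r := by simpa using hy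
    simp only [ofScalars_apply_eq, smul_eq_mul, zero_add, hf y hy]
    exact (hsum y hy).hasSum

section TaylorCoefficients

variable {𝕜 : Type*} [NontriviallyNormedField 𝕜] [CompleteSpace 𝕜] {f : 𝕜 → 𝕜} {a : ℕ → 𝕜}
  {x : 𝕜} {r : ENNReal}

theorem HasFPowerSeriesOnBall.iteratedDeriv_eq_factorial_mul
    (hf : HasFPowerSeriesOnBall f (ofScalars 𝕜 a) x r) (n : ℕ) :
    iteratedDeriv n f x = n ! * a n := by
  rw [iteratedDeriv_eq_iteratedFDeriv, ← hf.factorial_smul 1 n, ofScalars_apply_eq]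
  simp [nsmul_eq_mul]

theorem HasFPowerSeriesOnBall.iteratedDeriv_deriv_eq_factorial_mul
    (hf : HasFPowerSeriesOnBall f (ofScalars 𝕜 a) x r) (n : ℕ) :
    iteratedDeriv n (deriv f) x = n ! * ((n + 1) * a (n + 1)) := by
  rw [← iteratedDeriv_succ', hf.iteratedDeriv_eq_factorial_mul, factorial_succ]
  push_cast
  ring

end TaylorCoefficients

theorem iteratedDeriv_mul_eq_factorial_mul_sum {𝕜 : Type*} [NontriviallyNormedField 𝕜]
    {f g : 𝕜 → 𝕜} {x : 𝕜} {α β : ℕ → 𝕜} {n : ℕ}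
    (hf : ContDiffAt 𝕜 n f x) (hg : ContDiffAt 𝕜 n g x)
    (hα : ∀ k, iteratedDeriv k f x = k ! * α k) (hβ : ∀ k, iteratedDeriv k g x = k ! * β k) :
    iteratedDeriv n (f * g) x = n ! * ∑ i ∈ range (n + 1), α i * β (n - i) := by
  rw [iteratedDeriv_mul hf hg, mul_sum]
  refine sum_congr rfl fun i hi => ?_
  have hfac : (n.choose i : 𝕜) * i ! * (n - i)! = n ! := by
    rw [← cast_mul, ← cast_mul, choose_mul_factorial_mul_factorial (mem_range_succ_iff.mp hi)]
  rw [hα, hβ, ← hfac]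
  ring

theorem Complex.norm_iteratedDeriv_le_of_forall_mem_ball_norm_le {E : Type*}
    [NormedAddCommGroup E] [NormedSpace ℂ E] [CompleteSpace E] {f : ℂ → E} {c : ℂ} {R C : ℝ}
    (n : ℕ) (hR : 0 < R) (hf : DifferentiableOn ℂ f (ball c R)) (hC : ∀ z ∈ ball c R, ‖f z‖ ≤ C) :
    ‖iteratedDeriv n f c‖ ≤ n ! * C / R ^ n := by
  have hbound : ∀ r ∈ Set.Ioo 0 R, ‖iteratedDeriv n f c‖ ≤ n ! * C / r ^ n := fun r hr =>
    norm_iteratedDeriv_le_of_forall_mem_sphere_norm_le n hr.1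
      (hf.diffContOnCl_ball (closedBall_subset_ball hr.2))
      fun z hz => hC z (sphere_subset_closedBall.trans (closedBall_subset_ball hr.2) hz)
  have hlim : Filter.Tendsto (fun r : ℝ => n ! * C / r ^ n) (nhdsWithin R (Set.Iio R))
      (nhds (n ! * C / R ^ n)) :=
    ((continuousAt_const.div (continuous_pow n).continuousAt (pow_ne_zero n hR.ne')).tendsto).mono_left
      nhdsWithin_le_nhds
  exact ge_of_tendsto hlim (Filter.eventually_of_mem (Ioo_mem_nhdsLT hR) hbound)

theorem stmt_3_general (h g : ℂ → ℂ) (a b : ℕ → ℂ) (Λ₂ : ℝ)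
    (hh : AnalyticOnNhd ℂ h (ball 0 1)) (hg : AnalyticOnNhd ℂ g (ball 0 1))
    (hasum : ∀ z ∈ ball (0 : ℂ) 1, Summable fun n => a n * z ^ n)
    (hbsum : ∀ z ∈ ball (0 : ℂ) 1, Summable fun n => b n * z ^ n)
    (hhs : ∀ z ∈ ball (0 : ℂ) 1, h z = ∑' n, a n * z ^ n)
    (hgs : ∀ z ∈ ball (0 : ℂ) 1, g z = ∑' n, b n * z ^ n)
    (hΛ : ∀ z ∈ ball (0 : ℂ) 1,
      ‖deriv h z * (starRingEnd ℂ) (deriv g z)‖ +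
        ‖h z * (starRingEnd ℂ) (deriv (deriv g) z)‖ ≤ Λ₂) :
    ∀ n : ℕ, ‖(∑ j ∈ Finset.range (n + 1),
      ((j : ℂ) + 1) * ((n : ℂ) - (j : ℂ) + 1) * a (j + 1) * b (n - j + 1))‖ ≤ Λ₂ := by
  intro n
  have hpa := hasFPowerSeriesOnBall_ofScalars_of_eq_tsum one_pos (by simpa using hasum)
    (by simpa using hhs)
  have hpb := hasFPowerSeriesOnBall_ofScalars_of_eq_tsum one_pos (by simpa using hbsum)
    (by simpa using hgs)
  have h0 : (0 : ℂ) ∈ ball (0 : ℂ) 1 := mem_ball_self one_pos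
  have htaylor := iteratedDeriv_mul_eq_factorial_mul_sum (n := n)
    (hh.deriv 0 h0).contDiffAt (hg.deriv 0 h0).contDiffAt
    hpa.iteratedDeriv_deriv_eq_factorial_mul hpb.iteratedDeriv_deriv_eq_factorial_mul
  have hcauchy := norm_iteratedDeriv_le_of_forall_mem_ball_norm_le n one_pos
    (hh.deriv.differentiableOn.mul hg.deriv.differentiableOn) fun z hz =>
      calc ‖deriv h z * deriv g z‖ = ‖deriv h z * (starRingEnd ℂ) (deriv g z)‖ := by simp
        _ ≤ Λ₂ := le_of_add_le_of_nonneg_left (hΛ z hz) (norm_nonneg _)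
  have hsum : ∑ j ∈ Finset.range (n + 1),
      ((j : ℂ) + 1) * ((n : ℂ) - (j : ℂ) + 1) * a (j + 1) * b (n - j + 1) =
      ∑ j ∈ Finset.range (n + 1), (j + 1) * a (j + 1) * ((↑(n - j) + 1) * b (n - j + 1)) := by
    refine sum_congr rfl fun j hj => ?_
    rw [cast_sub (mem_range_succ_iff.mp hj)]
    ring
  rw [htaylor, norm_mul, one_pow, div_one, norm_natCast] at hcauchy
  rw [hsum]
  exact le_of_mul_le_mul_left hcauchy (by positivity)

/-- Coefficient estimate for a logharmonic mapping `L = h · conj g` with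
`Λ_{L_z̄} ≤ Λ₂` on the unit disk: the second family of bounds. -/
theorem stmt_3 (h g : ℂ → ℂ) (a b : ℕ → ℂ) (Λ₂ : ℝ)
    (ha0 : a 0 = 0) (ha1 : a 1 = 1) (hb0 : b 0 = 1)
    (hh : AnalyticOnNhd ℂ h (ball 0 1)) (hg : AnalyticOnNhd ℂ g (ball 0 1))
    (hasum : ∀ z ∈ ball (0 : ℂ) 1, Summable fun n => a n * z ^ n)
    (hbsum : ∀ z ∈ ball (0 : ℂ) 1, Summable fun n => b n * z ^ n)
    (hhs : ∀ z ∈ ball (0 : ℂ) 1, h z = ∑' n, a n * z ^ n)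
    (hgs : ∀ z ∈ ball (0 : ℂ) 1, g z = ∑' n, b n * z ^ n)
    (hΛ : ∀ z ∈ ball (0 : ℂ) 1,
      ‖deriv h z * (starRingEnd ℂ) (deriv g z)‖ +
        ‖h z * (starRingEnd ℂ) (deriv (deriv g) z)‖ ≤ Λ₂) :
    ∀ n : ℕ, ‖(∑ j ∈ Finset.range (n + 1),
      ((j : ℂ) + 1) * ((n : ℂ) - (j : ℂ) + 1) * a (j + 1) * b (n - j + 1))‖ ≤ Λ₂ :=
  stmt_3_general h g a b Λ₂ hh hg hasum hbsum hhs hgs hΛ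
end

section
/- Let L(z) = h(z)·conj(g(z)) be logharmonic in the unit disk 𝔻, where h(z) = z + Σ_{n=2}^∞ a_n z^n and g(z) = 1 + Σ_{n=1}^∞ b_n z^n are analytic on 𝔻 (with the conventions a₁ = 1, b₀ = 1). If Λ_{L_z}(z) = |h''(z)·conj(g(z))| + |h'(z)·conj(g'(z))| ≤ Λ₁ for all z ∈ 𝔻, then Σ_{n=0}^∞ |Σ_{j=0}^n (j+1)(j+2)·a_{j+2}·b_{n−j}|² + Σ_{n=0}^∞ |Σ_{j=0}^n (j+1)(n−j+1)·a_{j+1}·b_{n−j+1}|² ≤ Λ₁². -/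
/-!
Write `F = h'' g` and `G = h' g'`. By the Cauchy product formula their Taylor coefficients `cₙ`,
`dₙ` are the two convolutions in the statement, and `|L_{zz}| + |L_{z̄z}| = |F| + |G|`.
Parseval's identity on the circle `|z| = r`, taken here in its discrete form at the `M`-th roots
of unity, gives `∑ (|cₙ|² + |dₙ|²) r²ⁿ ≤ sup (|F|² + |G|²) ≤ Λ₁²`; let `M → ∞` and then `r → 1`.
-/

open Complex ComplexConjugate Metric Finset Filter Topology FormalMultilinearSeries

section PowerSeries

variable {𝕜 : Type*} [RCLike 𝕜] {f g : 𝕜 → 𝕜} {c d : ℕ → 𝕜} {R : ℝ}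

theorem hasFPowerSeriesOnBall_ofScalars_of_hasSum (hR : 0 < R)
    (hf : ∀ z ∈ ball (0 : 𝕜) R, HasSum (fun n => c n * z ^ n) (f z)) :
    HasFPowerSeriesOnBall f (ofScalars 𝕜 c) 0 (ENNReal.ofReal R) where
  r_le := by
    refine ENNReal.le_of_forall_nnreal_lt fun ρ hρ => ?_
    have hρR : ((ρ : ℝ) : 𝕜) ∈ ball (0 : 𝕜) R := by
      rw [← eball_ofReal]
      simpa [edist_dist] using hρ
    refine (ofScalars 𝕜 c).le_radius_of_tendsto (l := 0) ?_
    simpa [ofScalars_norm] using (hf _ hρR).summable.tendsto_atTop_zero.norm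
  r_pos := ENNReal.ofReal_pos.2 hR
  hasSum {z} hz := by
    rw [eball_ofReal] at hz
    simpa [ofScalars_apply_eq, mul_comm] using hf z hz

theorem summable_norm_of_hasSum
    (hf : ∀ z ∈ ball (0 : 𝕜) R, HasSum (fun n => c n * z ^ n) (f z)) {z : 𝕜}
    (hz : z ∈ ball (0 : 𝕜) R) : Summable fun n => ‖c n * z ^ n‖ := by
  have hp := hasFPowerSeriesOnBall_ofScalars_of_hasSum (pos_of_mem_ball hz) hf
  have := (ofScalars 𝕜 c).summable_norm_apply
    (eball_subset_eball hp.r_le (by rwa [eball_ofReal]))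
  simpa [ofScalars_apply_eq, mul_comm] using this

theorem hasSum_deriv_of_hasSum
    (hf : ∀ z ∈ ball (0 : 𝕜) R, HasSum (fun n => c n * z ^ n) (f z)) :
    ∀ z ∈ ball (0 : 𝕜) R, HasSum (fun n => (n + 1) * c (n + 1) * z ^ n) (deriv f z) := by
  intro z hz
  have hp := (hasFPowerSeriesOnBall_ofScalars_of_hasSum (pos_of_mem_ball hz) hf).fderiv
  have := (hp.hasSum (by rwa [eball_ofReal])).mapL (ContinuousLinearMap.apply 𝕜 𝕜 (1 : 𝕜))
  simpa [apply_eq_pow_smul_coeff, mul_comm, mul_left_comm, fderiv_apply_one_eq_deriv] using this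

theorem hasSum_mul_of_hasSum
    (hf : ∀ z ∈ ball (0 : 𝕜) R, HasSum (fun n => c n * z ^ n) (f z))
    (hg : ∀ z ∈ ball (0 : 𝕜) R, HasSum (fun n => d n * z ^ n) (g z)) :
    ∀ z ∈ ball (0 : 𝕜) R, HasSum
      (fun n => (∑ j ∈ range (n + 1), c j * d (n - j)) * z ^ n) (f z * g z) := by
  intro z hz
  have := hasSum_sum_range_mul_of_summable_norm (summable_norm_of_hasSum hf hz)
    (summable_norm_of_hasSum hg hz)
  rw [(hf z hz).tsum_eq, (hg z hz).tsum_eq] at this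
  refine this.congr_fun fun n => ?_
  rw [sum_mul]
  refine sum_congr rfl fun j hj => ?_
  obtain ⟨k, rfl⟩ := Nat.exists_eq_add_of_le (Nat.le_of_lt_succ (mem_range.1 hj))
  rw [Nat.add_sub_cancel_left, pow_add]
  ring

end PowerSeries

theorem IsPrimitiveRoot.sum_pow_mul_conj_pow {ζ : ℂ} {M : ℕ} (hζ : IsPrimitiveRoot ζ M)
    {n m : ℕ} (hn : n < M) (hm : m < M) :
    ∑ k ∈ range M, (ζ ^ n * conj ζ ^ m) ^ k = if n = m then (M : ℂ) else 0 := by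
  have hζ0 : ζ ≠ 0 := hζ.ne_zero (by omega)
  rw [← inv_eq_conj (hζ.norm'_eq_one (by omega)), inv_pow, ← div_eq_mul_inv]
  split_ifs with hnm
  · simp [hnm, pow_ne_zero m hζ0]
  · have hω : ζ ^ n / ζ ^ m ≠ 1 := fun h =>
      hnm (hζ.pow_inj hn hm (div_eq_one_iff_eq (pow_ne_zero m hζ0) |>.1 h))
    have hωM : (ζ ^ n / ζ ^ m) ^ M = 1 := by
      rw [div_pow, ← pow_mul, ← pow_mul, mul_comm n, mul_comm m, pow_mul, pow_mul,
        hζ.pow_eq_one, one_pow, one_pow, div_one]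
    have := geom_sum_mul (ζ ^ n / ζ ^ m) M
    rw [hωM, sub_self] at this
    exact (mul_eq_zero.1 this).resolve_right (sub_ne_zero.2 hω)

theorem IsPrimitiveRoot.sum_norm_sq_sum_pow {ζ : ℂ} {M : ℕ} (hζ : IsPrimitiveRoot ζ M)
    (e : ℕ → ℂ) :
    ∑ k ∈ range M, ‖∑ n ∈ range M, e n * (ζ ^ k) ^ n‖ ^ 2 = M * ∑ n ∈ range M, ‖e n‖ ^ 2 := by
  suffices ∑ k ∈ range M, ((‖∑ n ∈ range M, e n * (ζ ^ k) ^ n‖ ^ 2 : ℝ) : ℂ)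
      = M * ∑ n ∈ range M, ((‖e n‖ ^ 2 : ℝ) : ℂ) by exact_mod_cast this
  simp only [ofReal_pow, ← mul_conj', map_sum, map_mul, map_pow, sum_mul_sum]
  rw [sum_comm, mul_sum]
  refine sum_congr rfl fun n hn => ?_
  rw [sum_comm]
  calc ∑ m ∈ range M, ∑ k ∈ range M, e n * (ζ ^ k) ^ n * (conj (e m) * (conj ζ ^ k) ^ m)
      = ∑ m ∈ range M, e n * conj (e m) * ∑ k ∈ range M, (ζ ^ n * conj ζ ^ m) ^ k := by
        refine sum_congr rfl fun m _ => ?_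
        rw [mul_sum]
        refine sum_congr rfl fun k _ => ?_
        ring
    _ = M * (e n * conj (e n)) := by
        rw [sum_congr rfl fun m hm => by
          rw [hζ.sum_pow_mul_conj_pow (mem_range.1 hn) (mem_range.1 hm)]]
        simp [hn, mul_comm]

theorem norm_sum_range_le_norm_tsum_add {E : Type*} [NormedAddCommGroup E] [CompleteSpace E]
    {f : ℕ → E} (hf : Summable fun n => ‖f n‖) (M : ℕ) :
    ‖∑ n ∈ range M, f n‖ ≤ ‖∑' n, f n‖ + ∑' n, ‖f (n + M)‖ := by
  rw [eq_sub_of_add_eq (hf.of_norm.sum_add_tsum_nat_add M)]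
  exact (norm_sub_le _ _).trans
    (add_le_add_right
      (norm_tsum_le_tsum_norm ((summable_nat_add_iff (f := fun n => ‖f n‖) M).2 hf)) _)

theorem sum_range_norm_sq_add_le {c d : ℕ → ℂ} (hc : Summable fun n => ‖c n‖)
    (hd : Summable fun n => ‖d n‖) {Λ : ℝ}
    (hΛ : ∀ z : ℂ, ‖z‖ = 1 → ‖∑' n, c n * z ^ n‖ + ‖∑' n, d n * z ^ n‖ ≤ Λ) (K : ℕ) :
    ∑ n ∈ range K, (‖c n‖ ^ 2 + ‖d n‖ ^ 2) ≤ Λ ^ 2 := by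
  have norm_term : ∀ (e : ℕ → ℂ) {z : ℂ}, ‖z‖ = 1 → ∀ n, ‖e n * z ^ n‖ = ‖e n‖ := by
    intro e z hz n
    simp [hz]
  -- Parseval at the `M`-th roots of unity, applied to the truncations at degree `M`
  have truncation : ∀ M : ℕ, 0 < M →
      ∑ n ∈ range M, (‖c n‖ ^ 2 + ‖d n‖ ^ 2)
        ≤ (Λ + ∑' n, ‖c (n + M)‖ + ∑' n, ‖d (n + M)‖) ^ 2 := by
    intro M hM
    have hζ := isPrimitiveRoot_exp M hM.ne'
    set ζ := cexp (2 * Real.pi * I / M)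
    have hζk : ∀ k : ℕ, ‖ζ ^ k‖ = 1 := fun k => by
      rw [norm_pow, hζ.norm'_eq_one hM.ne', one_pow]
    have partial_sum_le : ∀ (e : ℕ → ℂ), Summable (fun n => ‖e n‖) → ∀ k : ℕ,
        ‖∑ n ∈ range M, e n * (ζ ^ k) ^ n‖
          ≤ ‖∑' n, e n * (ζ ^ k) ^ n‖ + ∑' n, ‖e (n + M)‖ := by
      intro e he k
      simpa only [norm_term e (hζk k)] using norm_sum_range_le_norm_tsum_add
        (f := fun n => e n * (ζ ^ k) ^ n) (by simpa only [norm_term e (hζk k)] using he) M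
    have hsum : ∑ k ∈ range M, (‖∑ n ∈ range M, c n * (ζ ^ k) ^ n‖ ^ 2
        + ‖∑ n ∈ range M, d n * (ζ ^ k) ^ n‖ ^ 2)
        ≤ ∑ k ∈ range M, (Λ + ∑' n, ‖c (n + M)‖ + ∑' n, ‖d (n + M)‖) ^ 2 := by
      refine sum_le_sum fun k _ => ?_
      have hP := partial_sum_le c hc k
      have hQ := partial_sum_le d hd k
      have := hΛ _ (hζk k)
      nlinarith [norm_nonneg (∑ n ∈ range M, c n * (ζ ^ k) ^ n),
        norm_nonneg (∑ n ∈ range M, d n * (ζ ^ k) ^ n)]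
    rw [sum_add_distrib, hζ.sum_norm_sq_sum_pow, hζ.sum_norm_sq_sum_pow, ← mul_add,
      sum_const, card_range, nsmul_eq_mul, ← sum_add_distrib] at hsum
    exact le_of_mul_le_mul_left hsum (by exact_mod_cast hM)
  have tails : Tendsto (fun M : ℕ => (Λ + ∑' n, ‖c (n + M)‖ + ∑' n, ‖d (n + M)‖) ^ 2)
      atTop (𝓝 (Λ ^ 2)) := by
    simpa using ((tendsto_sum_nat_add fun n => ‖c n‖).const_add Λ |>.add
      (tendsto_sum_nat_add fun n => ‖d n‖)).pow 2
  refine ge_of_tendsto tails ?_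
  filter_upwards [eventually_ge_atTop K, eventually_gt_atTop 0] with M hKM hM
  exact (sum_le_sum_of_subset_of_nonneg (range_subset_range.2 hKM)
    fun n _ _ => by positivity).trans (truncation M hM)

theorem tsum_add_tsum_le_of_sum_range_le {x y : ℕ → ℝ} (hx : ∀ n, 0 ≤ x n) (hy : ∀ n, 0 ≤ y n)
    {C : ℝ} (h : ∀ K, ∑ n ∈ range K, (x n + y n) ≤ C) : ∑' n, x n + ∑' n, y n ≤ C := by
  have hxy : Summable fun n => x n + y n :=
    summable_of_sum_range_le (fun n => add_nonneg (hx n) (hy n)) h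
  rw [← (hxy.of_nonneg_of_le hx fun n => le_add_of_nonneg_right (hy n)).tsum_add
    (hxy.of_nonneg_of_le hy fun n => le_add_of_nonneg_left (hx n))]
  exact Real.tsum_le_of_sum_range_le (fun n => add_nonneg (hx n) (hy n)) h

theorem tsum_norm_sq_add_tsum_norm_sq_le_of_hasSum {F G : ℂ → ℂ} {c d : ℕ → ℂ}
    (hF : ∀ z ∈ ball (0 : ℂ) 1, HasSum (fun n => c n * z ^ n) (F z))
    (hG : ∀ z ∈ ball (0 : ℂ) 1, HasSum (fun n => d n * z ^ n) (G z)) {Λ : ℝ}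
    (hΛ : ∀ z ∈ ball (0 : ℂ) 1, ‖F z‖ + ‖G z‖ ≤ Λ) :
    ∑' n, ‖c n‖ ^ 2 + ∑' n, ‖d n‖ ^ 2 ≤ Λ ^ 2 := by
  have dilate : ∀ K : ℕ, ∀ r ∈ Set.Ioo (0 : ℝ) 1,
      ∑ n ∈ range K, (‖c n * (r : ℂ) ^ n‖ ^ 2 + ‖d n * (r : ℂ) ^ n‖ ^ 2) ≤ Λ ^ 2 := by
    intro K r ⟨hr0, hr1⟩
    have hr : (r : ℂ) ∈ ball (0 : ℂ) 1 := by simpa [abs_of_pos hr0] using hr1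
    have hrz : ∀ z : ℂ, ‖z‖ = 1 → (r : ℂ) * z ∈ ball (0 : ℂ) 1 := fun z hz => by
      simpa [hz, abs_of_pos hr0] using hr1
    refine sum_range_norm_sq_add_le (summable_norm_of_hasSum hF hr)
      (summable_norm_of_hasSum hG hr) (fun z hz => ?_) K
    have := hΛ _ (hrz z hz)
    rw [← (hF _ (hrz z hz)).tsum_eq, ← (hG _ (hrz z hz)).tsum_eq] at this
    simpa only [mul_pow, mul_assoc] using this
  have partial_sums : ∀ K : ℕ, ∑ n ∈ range K, (‖c n‖ ^ 2 + ‖d n‖ ^ 2) ≤ Λ ^ 2 := by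
    intro K
    have hcont : Continuous fun r : ℝ =>
        ∑ n ∈ range K, (‖c n * (r : ℂ) ^ n‖ ^ 2 + ‖d n * (r : ℂ) ^ n‖ ^ 2) := by
      fun_prop
    simpa using le_of_tendsto
      ((hcont.tendsto 1).mono_left (nhdsWithin_le_nhds (s := Set.Iio 1)))
      (eventually_of_mem (Ioo_mem_nhdsLT zero_lt_one) (dilate K))
  exact tsum_add_tsum_le_of_sum_range_le (fun n => by positivity) (fun n => by positivity)
    partial_sums

theorem stmt_4_general (h g : ℂ → ℂ) (a b : ℕ → ℂ) (Λ₁ : ℝ)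
    (hasum : ∀ z ∈ ball (0 : ℂ) 1, Summable fun n => a n * z ^ n)
    (hbsum : ∀ z ∈ ball (0 : ℂ) 1, Summable fun n => b n * z ^ n)
    (hhs : ∀ z ∈ ball (0 : ℂ) 1, h z = ∑' n, a n * z ^ n)
    (hgs : ∀ z ∈ ball (0 : ℂ) 1, g z = ∑' n, b n * z ^ n)
    (hΛ : ∀ z ∈ ball (0 : ℂ) 1,
      Norm.norm (deriv (deriv h) z * (starRingEnd ℂ) (g z)) +
        Norm.norm (deriv h z * (starRingEnd ℂ) (deriv g z)) ≤ Λ₁) :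
    (∑' n : ℕ, (Norm.norm (∑ j ∈ Finset.range (n + 1),
        ((j : ℂ) + 1) * ((j : ℂ) + 2) * a (j + 2) * b (n - j))) ^ 2) +
      (∑' n : ℕ, (Norm.norm (∑ j ∈ Finset.range (n + 1),
        ((j : ℂ) + 1) * ((n : ℂ) - (j : ℂ) + 1) * a (j + 1) * b (n - j + 1))) ^ 2)
      ≤ Λ₁ ^ 2 := by
  have hh : ∀ z ∈ ball (0 : ℂ) 1, HasSum (fun n => a n * z ^ n) (h z) := fun z hz =>
    hhs z hz ▸ (hasum z hz).hasSum
  have hg : ∀ z ∈ ball (0 : ℂ) 1, HasSum (fun n => b n * z ^ n) (g z) := fun z hz =>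
    hgs z hz ▸ (hbsum z hz).hasSum
  have hh' := hasSum_deriv_of_hasSum hh
  have hF := hasSum_mul_of_hasSum (hasSum_deriv_of_hasSum hh') hg
  have hG := hasSum_mul_of_hasSum hh' (hasSum_deriv_of_hasSum hg)
  refine tsum_norm_sq_add_tsum_norm_sq_le_of_hasSum (F := fun z => deriv (deriv h) z * g z)
    (G := fun z => deriv h z * deriv g z) (fun z hz => ?_) (fun z hz => ?_)
    (fun z hz => by simpa only [norm_mul, norm_conj] using hΛ z hz)
  · refine (hF z hz).congr_fun fun n => congr_arg (· * z ^ n) (sum_congr rfl fun j _ => ?_)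
    push_cast
    ring
  · refine (hG z hz).congr_fun fun n => congr_arg (· * z ^ n) (sum_congr rfl fun j hj => ?_)
    rw [Nat.cast_sub (Nat.le_of_lt_succ (mem_range.1 hj))]
    ring

/-- Coefficient estimate for a logharmonic mapping `L = h · conj g` with
`Λ_{L_z} ≤ Λ₁` on the unit disk: the first family of bounds. -/
theorem stmt_4 (h g : ℂ → ℂ) (a b : ℕ → ℂ) (Λ₁ : ℝ)
    (ha0 : a 0 = 0) (ha1 : a 1 = 1) (hb0 : b 0 = 1)
    (hh : AnalyticOnNhd ℂ h (ball 0 1)) (hg : AnalyticOnNhd ℂ g (ball 0 1))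
    (hasum : ∀ z ∈ ball (0 : ℂ) 1, Summable fun n => a n * z ^ n)
    (hbsum : ∀ z ∈ ball (0 : ℂ) 1, Summable fun n => b n * z ^ n)
    (hhs : ∀ z ∈ ball (0 : ℂ) 1, h z = ∑' n, a n * z ^ n)
    (hgs : ∀ z ∈ ball (0 : ℂ) 1, g z = ∑' n, b n * z ^ n)
    (hΛ : ∀ z ∈ ball (0 : ℂ) 1,
      Norm.norm (deriv (deriv h) z * (starRingEnd ℂ) (g z)) +
        Norm.norm (deriv h z * (starRingEnd ℂ) (deriv g z)) ≤ Λ₁) :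
    (∑' n : ℕ, (Norm.norm (∑ j ∈ Finset.range (n + 1),
        ((j : ℂ) + 1) * ((j : ℂ) + 2) * a (j + 2) * b (n - j))) ^ 2) +
      (∑' n : ℕ, (Norm.norm (∑ j ∈ Finset.range (n + 1),
        ((j : ℂ) + 1) * ((n : ℂ) - (j : ℂ) + 1) * a (j + 1) * b (n - j + 1))) ^ 2)
      ≤ Λ₁ ^ 2 :=
  stmt_4_general h g a b Λ₁ hasum hbsum hhs hgs hΛ
end

section
/- Let L(z) = h(z)·conj(g(z)) be logharmonic in the unit disk 𝔻, where h, g are analytic on 𝔻 and h(0) = 0. If Λ_L(z) = |h'(z)·g(z)| + |h(z)·g'(z)| ≤ Λ₂ for all z ∈ 𝔻, then |L(z)| ≤ Λ₂·|z| for every z ∈ 𝔻. -/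
/-!
`|L| = |h g|`, and the holomorphic product `h g` vanishes at `0` with `|(h g)'| ≤ |h' g| + |h g'| ≤ Λ₂`
on the disk, so the mean value inequality along the segment `[0, z]` gives `|h(z) g(z)| ≤ Λ₂ |z|`.
-/

open Complex Metric

theorem norm_le_mul_norm_of_norm_deriv_le {𝕜 E : Type*} [RCLike 𝕜] [NormedAddCommGroup E]
    [NormedSpace 𝕜 E] {f : 𝕜 → E} {C r : ℝ} (hf : ∀ z ∈ ball (0 : 𝕜) r, DifferentiableAt 𝕜 f z)
    (bound : ∀ z ∈ ball (0 : 𝕜) r, ‖deriv f z‖ ≤ C) (h0 : f 0 = 0) {z : 𝕜}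
    (hz : z ∈ ball (0 : 𝕜) r) : ‖f z‖ ≤ C * ‖z‖ := by
  have hr : 0 < r := pos_of_mem_ball hz
  simpa [h0] using (convex_ball (0 : 𝕜) r).norm_image_sub_le_of_norm_deriv_le hf bound
    (mem_ball_self hr) hz

/-- If `L = h · conj g` is logharmonic on the unit disk with `h 0 = 0` and
`Λ_L(z) = |h' g| + |h g'| ≤ Λ₂` there, then `|L z| ≤ Λ₂ |z|` on the disk. -/
theorem stmt_5 (h g : ℂ → ℂ) (Λ₂ : ℝ)
    (hh : AnalyticOnNhd ℂ h (ball 0 1)) (hg : AnalyticOnNhd ℂ g (ball 0 1))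
    (h0 : h 0 = 0)
    (hΛ : ∀ z ∈ ball (0 : ℂ) 1,
      ‖deriv h z * g z‖ + ‖h z * deriv g z‖ ≤ Λ₂) :
    ∀ z ∈ ball (0 : ℂ) 1,
      ‖h z * (starRingEnd ℂ) (g z)‖ ≤ Λ₂ * ‖z‖ := by
  intro z hz
  have hdiff : ∀ w ∈ ball (0 : ℂ) 1, DifferentiableAt ℂ (h * g) w := fun w hw =>
    (hh w hw).differentiableAt.mul (hg w hw).differentiableAt
  have hbound : ∀ w ∈ ball (0 : ℂ) 1, ‖deriv (h * g) w‖ ≤ Λ₂ := fun w hw => by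
    rw [deriv_mul (hh w hw).differentiableAt (hg w hw).differentiableAt]
    exact (norm_add_le _ _).trans (hΛ w hw)
  rw [norm_mul, RCLike.norm_conj, ← norm_mul]
  exact norm_le_mul_norm_of_norm_deriv_le hdiff hbound (by simp [h0]) hz
end

section
/- Let F(z) = |z|²·L(z) + K(z) on the unit disk 𝔻, where L(z) = h₁(z)·conj(g₁(z)) is logharmonic with h₁, g₁ analytic on 𝔻 and h₁(0) = 0, and K(z) = h₂(z) + conj(g₂(z)) is harmonic with h₂, g₂ analytic on 𝔻. Suppose F(0) = 0, λ_F(0) = ||h₂'(0)| − |g₂'(0)|| = 1, Λ_K(z) = |h₂'(z)| + |g₂'(z)| < Λ₁ for all z ∈ 𝔻, where Λ₁ > 1, and Λ_L(z) = |h₁'(z)·g₁(z)| + |h₁(z)·g₁'(z)| ≤ Λ₂ for all z ∈ 𝔻. Then for every r ∈ (0,1) and all z₁, z₂ in the disk 𝔻_r = {|z| < r}, |F(z₂) − F(z₁)| ≥ |z₂ − z₁| · ( Λ₁·(1 − Λ₁ r)/(Λ₁ − r) − 3 r² Λ₂ ). -/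
/-!
Write `|z|² L(z) = (z h₁(z)) · conj (z g₁(z))`. Along a segment in `𝔻_r` this product has
derivative of size at most `3 r² Λ₂ |z₂ - z₁|`, because `h₁ g₁` vanishes at `0` and has derivative
bounded by `Λ₂`, so `|h₁ g₁ (z)| ≤ Λ₂ |z|`.

For the harmonic part pick a unimodular `ε` with `ε (g₂ z₂ - g₂ z₁) = conj (g₂ z₂ - g₂ z₁)`; then
`K z₂ - K z₁ = Φ z₂ - Φ z₁` for the holomorphic `Φ = h₂ + ε g₂`, and `Φ'` maps `𝔻` into the disk
of radius `Λ₁` with `|Φ' 0| ≥ ||h₂' 0| - |g₂' 0|| = 1`. After rotating `Φ' 0` to a real `s ≥ 1`,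
Schwarz–Pick confines `Φ'(𝔻_r)` to a disk on which `Re Φ' ≥ Λ₁ (1 - Λ₁ r) / (Λ₁ - r)`, and
integrating `Re Φ'` along the segment gives the lower bound.
-/

open Complex Metric Set ComplexConjugate AffineMap

-- The hypothesis puts `p` in the image of `closedBall 0 r` under the automorphism of `ball 0 L`
-- sending `0` to `s`: a disk whose leftmost point `L (s - r L) / (L - r s)` increases with `s`.
theorem le_re_of_mul_norm_sub_le {L r s : ℝ} {p : ℂ} (hr : 0 ≤ r) (hrL : r * L < 1)
    (hs : 1 ≤ s) (hsL : s < L) (h : L * ‖p - s‖ ≤ r * ‖(L : ℂ) ^ 2 - s * p‖) :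
    L * (1 - L * r) / (L - r) ≤ p.re := by
  have hL : 0 < L := by linarith
  have hr1 : r < 1 := by nlinarith
  have hLrs : 0 < L - r * s := by nlinarith
  have hsq : L ^ 2 * ((p.re - s) ^ 2 + p.im ^ 2) ≤
      r ^ 2 * ((L ^ 2 - s * p.re) ^ 2 + s ^ 2 * p.im ^ 2) := by
    have := pow_le_pow_left₀ (by positivity) h 2
    simp only [mul_pow, Complex.sq_norm, normSq_apply, ← ofReal_pow, sub_re, sub_im, mul_re,
      mul_im, ofReal_re, ofReal_im] at this
    nlinarith [this]
  have habs : |L * (p.re - s)| ≤ |r * (L ^ 2 - s * p.re)| := by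
    rw [← sq_le_sq]
    nlinarith [mul_nonneg (mul_nonneg hLrs.le (by positivity : 0 ≤ L + r * s)) (sq_nonneg p.im)]
  have hre : L * (s - r * L) ≤ p.re * (L - r * s) := by
    rcases le_or_gt 0 (L ^ 2 - s * p.re) with hpos | hneg
    · rw [abs_of_nonneg (by positivity : 0 ≤ r * (L ^ 2 - s * p.re))] at habs
      nlinarith [neg_abs_le (L * (p.re - s))]
    · refine le_of_mul_le_mul_left ?_ (by linarith : 0 < s)
      nlinarith [mul_lt_mul_of_pos_right hneg hLrs, mul_nonneg (mul_nonneg (by linarith : 0 ≤ L)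
        (sub_nonneg.2 hsL.le)) (by linarith : 0 ≤ L + s)]
  rw [div_le_iff₀ (by linarith)]
  have key : L * (1 - L * r) * (L - r * s) ≤ p.re * (L - r) * (L - r * s) := by
    nlinarith [mul_nonneg (mul_nonneg (sub_nonneg.2 hs) (by nlinarith : (0:ℝ) ≤ 1 - r ^ 2))
      (by linarith : (0:ℝ) ≤ L)]
  exact le_of_mul_le_mul_right key hLrs

theorem mul_norm_sub_lt_norm_sub_conj_mul {L : ℝ} {a p : ℂ} (ha : ‖a‖ < L) (hp : ‖p‖ < L) :
    L * ‖p - a‖ < ‖(L : ℂ) ^ 2 - conj a * p‖ := by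
  have hL : 0 < L := (norm_nonneg a).trans_lt ha
  have hid : ‖(L : ℂ) ^ 2 - conj a * p‖ ^ 2 - (L * ‖p - a‖) ^ 2
      = (L ^ 2 - ‖a‖ ^ 2) * (L ^ 2 - ‖p‖ ^ 2) := by
    simp only [mul_pow, Complex.sq_norm, normSq_apply, ← ofReal_pow, sub_re, sub_im, mul_re,
      mul_im, ofReal_re, ofReal_im, conj_re, conj_im]
    ring
  have hpos : 0 < (L ^ 2 - ‖a‖ ^ 2) * (L ^ 2 - ‖p‖ ^ 2) := by
    apply mul_pos <;> nlinarith [norm_nonneg a, norm_nonneg p]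
  exact lt_of_pow_lt_pow_left₀ 2 (norm_nonneg _) (by linarith)

-- Schwarz–Pick, for maps of the unit disk into `ball 0 L`.
theorem mul_norm_sub_le_of_mapsTo_ball {φ : ℂ → ℂ} {L : ℝ}
    (hφ : DifferentiableOn ℂ φ (ball 0 1)) (hmaps : MapsTo φ (ball 0 1) (ball 0 L))
    {z : ℂ} (hz : z ∈ ball 0 1) :
    L * ‖φ z - φ 0‖ ≤ ‖z‖ * ‖(L : ℂ) ^ 2 - conj (φ 0) * φ z‖ := by
  have hball : ∀ w ∈ ball (0 : ℂ) 1, ‖φ w‖ < L := fun w hw => mem_ball_zero_iff.1 (hmaps hw)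
  have hL : 0 ≤ L := (norm_nonneg _).trans (hball 0 (mem_ball_self one_pos)).le
  have hmob : ∀ w ∈ ball (0 : ℂ) 1,
      L * ‖φ w - φ 0‖ < ‖(L : ℂ) ^ 2 - conj (φ 0) * φ w‖ := fun w hw =>
    mul_norm_sub_lt_norm_sub_conj_mul (hball 0 (mem_ball_self one_pos)) (hball w hw)
  have hden : ∀ w ∈ ball (0 : ℂ) 1, (L : ℂ) ^ 2 - conj (φ 0) * φ w ≠ 0 := fun w hw h => by
    have := hmob w hw
    rw [h, norm_zero] at this
    exact this.not_ge (by positivity)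
  set ψ : ℂ → ℂ := fun w => L * (φ w - φ 0) / ((L : ℂ) ^ 2 - conj (φ 0) * φ w)
  have hψ : DifferentiableOn ℂ ψ (ball 0 1) :=
    ((differentiableOn_const _).mul (hφ.sub_const _)).div
      ((differentiableOn_const _).sub ((differentiableOn_const _).mul hφ)) hden
  have hnormψ : ∀ w, ‖ψ w‖ = L * ‖φ w - φ 0‖ / ‖(L : ℂ) ^ 2 - conj (φ 0) * φ w‖ := fun w => by
    simp [ψ, abs_of_nonneg hL]
  have hψmaps : MapsTo ψ (ball 0 1) (closedBall 0 1) := fun w hw => by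
    rw [mem_closedBall_zero_iff, hnormψ w]
    exact (div_lt_one (norm_pos_iff.2 (hden w hw))).2 (hmob w hw) |>.le
  have hschwarz := Complex.norm_le_norm_of_mapsTo_ball hψ hψmaps (by simp [ψ])
    (mem_ball_zero_iff.1 hz)
  rw [hnormψ z, div_le_iff₀ (norm_pos_iff.2 (hden z hz))] at hschwarz
  exact hschwarz

theorem le_re_of_mapsTo_ball {ψ : ℂ → ℂ} {L r s : ℝ} (hψ : DifferentiableOn ℂ ψ (ball 0 1))
    (hmaps : MapsTo ψ (ball 0 1) (ball 0 L)) (hψ0 : ψ 0 = s) (hs : 1 ≤ s) (hrL : r * L < 1)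
    {z : ℂ} (hz : z ∈ ball (0 : ℂ) r) : L * (1 - L * r) / (L - r) ≤ (ψ z).re := by
  have hr : 0 ≤ r := (norm_nonneg z).trans (mem_ball_zero_iff.1 hz).le
  have hsL : s < L := by
    simpa [hψ0, abs_of_nonneg (by linarith : 0 ≤ s)] using hmaps (mem_ball_self one_pos)
  have hr1 : r ≤ 1 := by nlinarith
  refine le_re_of_mul_norm_sub_le hr hrL hs hsL ?_
  have := mul_norm_sub_le_of_mapsTo_ball hψ hmaps (ball_subset_ball hr1 hz)
  rw [hψ0, conj_ofReal] at this
  exact this.trans (mul_le_mul_of_nonneg_right (mem_ball_zero_iff.1 hz).le (norm_nonneg _))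

theorem hasDerivAt_comp_lineMap {f : ℂ → ℂ} {z₁ z₂ : ℂ} {t : ℝ}
    (hf : DifferentiableAt ℂ f (lineMap z₁ z₂ t)) :
    HasDerivAt (fun t : ℝ => f (lineMap z₁ z₂ t)) (deriv f (lineMap z₁ z₂ t) * (z₂ - z₁)) t :=
  hf.hasDerivAt.comp t hasDerivAt_lineMap

theorem mul_sq_norm_le_re_sub_mul_conj {Φ : ℂ → ℂ} {s : Set ℂ} {m : ℝ} (hs : Convex ℝ s)
    (hΦ : ∀ z ∈ s, DifferentiableAt ℂ Φ z) (hm : ∀ z ∈ s, m ≤ (deriv Φ z).re)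
    {z₁ z₂ : ℂ} (hz₁ : z₁ ∈ s) (hz₂ : z₂ ∈ s) :
    m * ‖z₂ - z₁‖ ^ 2 ≤ ((Φ z₂ - Φ z₁) * conj (z₂ - z₁)).re := by
  set f : ℝ → ℝ := fun t => (Φ (lineMap z₁ z₂ t) * conj (z₂ - z₁)).re
  have hmem : ∀ t ∈ Icc (0 : ℝ) 1, lineMap z₁ z₂ t ∈ s := fun t ht => hs.lineMap_mem hz₁ hz₂ ht
  have hf : ∀ t ∈ Icc (0 : ℝ) 1,
      HasDerivAt f ((deriv Φ (lineMap z₁ z₂ t)).re * ‖z₂ - z₁‖ ^ 2) t := fun t ht => by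
    have := reCLM.hasFDerivAt.comp_hasDerivAt t
      ((hasDerivAt_comp_lineMap (hΦ _ (hmem t ht))).mul_const (conj (z₂ - z₁)))
    refine this.congr_deriv ?_
    rw [reCLM_apply, mul_assoc, mul_conj, re_mul_ofReal, normSq_eq_norm_sq]
  have hmono := (convex_Icc (0 : ℝ) 1).mul_sub_le_image_sub_of_le_deriv
    (f := f) (C := m * ‖z₂ - z₁‖ ^ 2)
    (fun t ht => (hf t ht).continuousAt.continuousWithinAt)
    (fun t ht => (hf t (interior_subset ht)).differentiableAt.differentiableWithinAt)
    (fun t ht => by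
      rw [(hf t (interior_subset ht)).deriv]
      exact mul_le_mul_of_nonneg_right (hm _ (hmem t (interior_subset ht))) (sq_nonneg _))
    0 (left_mem_Icc.2 zero_le_one) 1 (right_mem_Icc.2 zero_le_one) zero_le_one
  simpa [f, sub_mul] using hmono

theorem norm_mul_conj_sub_le {u v : ℂ → ℂ} {s : Set ℂ} {C : ℝ} (hs : Convex ℝ s)
    (hu : ∀ z ∈ s, DifferentiableAt ℂ u z) (hv : ∀ z ∈ s, DifferentiableAt ℂ v z)
    (hC : ∀ z ∈ s, ‖deriv u z‖ * ‖v z‖ + ‖u z‖ * ‖deriv v z‖ ≤ C)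
    {z₁ z₂ : ℂ} (hz₁ : z₁ ∈ s) (hz₂ : z₂ ∈ s) :
    ‖u z₂ * conj (v z₂) - u z₁ * conj (v z₁)‖ ≤ C * ‖z₂ - z₁‖ := by
  have hmem : ∀ t ∈ Icc (0 : ℝ) 1, lineMap z₁ z₂ t ∈ s := fun t ht => hs.lineMap_mem hz₁ hz₂ ht
  have hf : ∀ t ∈ Icc (0 : ℝ) 1,
      HasDerivAt (fun t : ℝ => u (lineMap z₁ z₂ t) * conj (v (lineMap z₁ z₂ t)))
      (deriv u (lineMap z₁ z₂ t) * (z₂ - z₁) * conj (v (lineMap z₁ z₂ t)) +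
        u (lineMap z₁ z₂ t) * conj (deriv v (lineMap z₁ z₂ t) * (z₂ - z₁))) t := fun t ht =>
    (hasDerivAt_comp_lineMap (hu _ (hmem t ht))).mul
      (hasDerivAt_comp_lineMap (hv _ (hmem t ht))).star
  have := norm_image_sub_le_of_norm_deriv_le_segment_01' (C := C * ‖z₂ - z₁‖)
    (fun t ht => (hf t ht).hasDerivWithinAt) (fun t ht => by
      refine (norm_add_le _ _).trans ?_
      simp only [norm_mul, RCLike.norm_conj]
      nlinarith [hC _ (hmem t (Ico_subset_Icc_self ht)), norm_nonneg (z₂ - z₁)])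
  simpa using this

theorem exists_norm_eq_one_mul_eq_norm (w : ℂ) : ∃ c : ℂ, ‖c‖ = 1 ∧ c * w = ‖w‖ :=
  ⟨exp (-arg w * I), by simpa using norm_exp_ofReal_mul_I (-arg w), by
    nth_rewrite 2 [← norm_mul_exp_arg_mul_I w]
    rw [mul_left_comm, ← Complex.exp_add]
    simp⟩

theorem exists_norm_eq_one_mul_eq_conj (w : ℂ) : ∃ ε : ℂ, ‖ε‖ = 1 ∧ ε * w = conj w := by
  obtain ⟨c, hc, hcw⟩ := exists_norm_eq_one_mul_eq_norm w
  have hcc : conj c * c = 1 := by rw [mul_comm, mul_conj', hc]; simp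
  refine ⟨c ^ 2, by rw [norm_pow, hc, one_pow], ?_⟩
  have hconj : conj c * conj w = ‖w‖ := by rw [← map_mul, hcw, conj_ofReal]
  calc c ^ 2 * w = c * (c * w) := by ring
    _ = c * (conj c * conj w) := by rw [hcw, hconj]
    _ = conj w := by rw [← mul_assoc, mul_comm c, hcc, one_mul]

theorem mul_norm_sub_le_norm_sub_of_norm_deriv_lt {Φ : ℂ → ℂ} {L r : ℝ}
    (hΦ : AnalyticOnNhd ℂ Φ (ball 0 1)) (hb : ∀ z ∈ ball (0 : ℂ) 1, ‖deriv Φ z‖ < L)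
    (h0 : 1 ≤ ‖deriv Φ 0‖) (hr : r ≤ 1) {z₁ z₂ : ℂ} (hz₁ : z₁ ∈ ball (0 : ℂ) r)
    (hz₂ : z₂ ∈ ball (0 : ℂ) r) :
    ‖z₂ - z₁‖ * (L * (1 - L * r) / (L - r)) ≤ ‖Φ z₂ - Φ z₁‖ := by
  have hL : 1 < L := h0.trans_lt (hb 0 (mem_ball_self one_pos))
  rcases le_or_gt 1 (r * L) with hrL | hrL
  · have : L * (1 - L * r) / (L - r) ≤ 0 := div_nonpos_of_nonpos_of_nonneg
      (mul_nonpos_of_nonneg_of_nonpos (by linarith) (by linarith)) (by linarith)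
    exact (mul_nonpos_of_nonneg_of_nonpos (norm_nonneg _) this).trans (norm_nonneg _)
  obtain ⟨c, hc, hca⟩ := exists_norm_eq_one_mul_eq_norm (deriv Φ 0)
  have hsub : ball (0 : ℂ) r ⊆ ball 0 1 := ball_subset_ball hr
  have hre : ∀ z ∈ ball (0 : ℂ) r, L * (1 - L * r) / (L - r) ≤ (deriv (fun w => c * Φ w) z).re :=
    fun z hz => by
      rw [deriv_const_mul c (hΦ z (hsub hz)).differentiableAt]
      refine le_re_of_mapsTo_ball (hΦ.deriv.differentiableOn.const_mul c) (fun w hw => ?_) hca h0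
        hrL hz
      rw [mem_ball_zero_iff, norm_mul, hc, one_mul]
      exact hb w hw
  have key := mul_sq_norm_le_re_sub_mul_conj (convex_ball 0 r)
    (fun z hz => (hΦ z (hsub hz)).differentiableAt.const_mul c) hre hz₁ hz₂
  have hle : ((c * Φ z₂ - c * Φ z₁) * conj (z₂ - z₁)).re ≤ ‖Φ z₂ - Φ z₁‖ * ‖z₂ - z₁‖ := by
    refine (re_le_norm _).trans_eq ?_
    rw [← mul_sub, norm_mul, norm_mul, hc, one_mul, Complex.norm_conj]
  rcases eq_or_ne z₂ z₁ with rfl | hne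
  · simp
  refine le_of_mul_le_mul_right ?_ (norm_pos_iff.2 (sub_ne_zero.2 hne))
  linarith

theorem mul_norm_sub_le_norm_sub_add_conj {h g : ℂ → ℂ} {L r : ℝ}
    (hh : AnalyticOnNhd ℂ h (ball 0 1)) (hg : AnalyticOnNhd ℂ g (ball 0 1))
    (hb : ∀ z ∈ ball (0 : ℂ) 1, ‖deriv h z‖ + ‖deriv g z‖ < L)
    (h0 : 1 ≤ |‖deriv h 0‖ - ‖deriv g 0‖|) (hr : r ≤ 1) {z₁ z₂ : ℂ}
    (hz₁ : z₁ ∈ ball (0 : ℂ) r) (hz₂ : z₂ ∈ ball (0 : ℂ) r) :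
    ‖z₂ - z₁‖ * (L * (1 - L * r) / (L - r)) ≤ ‖h z₂ + conj (g z₂) - (h z₁ + conj (g z₁))‖ := by
  obtain ⟨ε, hε, hεg⟩ := exists_norm_eq_one_mul_eq_conj (g z₂ - g z₁)
  have hderiv : ∀ z ∈ ball (0 : ℂ) 1,
      deriv (fun w => h w + ε * g w) z = deriv h z + ε * deriv g z := fun z hz => by
    rw [deriv_fun_add (hh z hz).differentiableAt ((hg z hz).differentiableAt.const_mul ε),
      deriv_const_mul _ (hg z hz).differentiableAt]
  have hsplit : h z₂ + conj (g z₂) - (h z₁ + conj (g z₁)) =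
      (h z₂ + ε * g z₂) - (h z₁ + ε * g z₁) := by
    linear_combination -hεg - map_sub conj (g z₂) (g z₁)
  rw [hsplit]
  refine mul_norm_sub_le_norm_sub_of_norm_deriv_lt (Φ := fun w => h w + ε * g w)
    (hh.add (analyticOnNhd_const.mul hg)) (fun z hz => ?_) ?_ hr hz₁ hz₂
  · rw [hderiv z hz]
    refine (norm_add_le _ _).trans_lt ?_
    rw [norm_mul, hε, one_mul]
    exact hb z hz
  · rw [hderiv 0 (mem_ball_self one_pos)]
    refine h0.trans ?_
    simpa [norm_mul, hε] using abs_norm_sub_norm_le (deriv h 0) (-(ε * deriv g 0))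

theorem norm_mul_le_mul_norm_of_apply_zero {h g : ℂ → ℂ} {Λ : ℝ}
    (hh : AnalyticOnNhd ℂ h (ball 0 1)) (hg : AnalyticOnNhd ℂ g (ball 0 1)) (hh0 : h 0 = 0)
    (hΛ : ∀ z ∈ ball (0 : ℂ) 1, ‖deriv h z * g z‖ + ‖h z * deriv g z‖ ≤ Λ)
    {z : ℂ} (hz : z ∈ ball (0 : ℂ) 1) : ‖h z * g z‖ ≤ Λ * ‖z‖ := by
  have hd : ∀ w ∈ ball (0 : ℂ) 1, HasDerivAt (fun w => h w * g w)
      (deriv h w * g w + h w * deriv g w) w := fun w hw =>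
    (hh w hw).differentiableAt.hasDerivAt.mul (hg w hw).differentiableAt.hasDerivAt
  have := (convex_ball (0 : ℂ) 1).norm_image_sub_le_of_norm_hasDerivWithin_le
    (fun w hw => (hd w hw).hasDerivWithinAt) (fun w hw => (norm_add_le _ _).trans (hΛ w hw))
    (mem_ball_self one_pos) hz
  simpa [hh0] using this

theorem norm_deriv_mul_id_le {h g : ℂ → ℂ} {Λ : ℝ}
    (hh : AnalyticOnNhd ℂ h (ball 0 1)) (hg : AnalyticOnNhd ℂ g (ball 0 1)) (hh0 : h 0 = 0)
    (hΛ : ∀ z ∈ ball (0 : ℂ) 1, ‖deriv h z * g z‖ + ‖h z * deriv g z‖ ≤ Λ)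
    {z : ℂ} (hz : z ∈ ball (0 : ℂ) 1) :
    ‖deriv (fun w => w * h w) z‖ * ‖z * g z‖ + ‖z * h z‖ * ‖deriv (fun w => w * g w) z‖ ≤
      3 * Λ * ‖z‖ ^ 2 := by
  have hmul := norm_mul_le_mul_norm_of_apply_zero hh hg hh0 hΛ hz
  rw [((hasDerivAt_id' z).fun_mul (hh z hz).differentiableAt.hasDerivAt).deriv,
    ((hasDerivAt_id' z).fun_mul (hg z hz).differentiableAt.hasDerivAt).deriv, one_mul, one_mul]
  have e₁ : ‖h z + z * deriv h z‖ * ‖z * g z‖ = ‖z‖ * ‖h z * g z + z * (deriv h z * g z)‖ := by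
    rw [← norm_mul, ← norm_mul]; ring_nf
  have e₂ : ‖z * h z‖ * ‖g z + z * deriv g z‖ = ‖z‖ * ‖h z * g z + z * (h z * deriv g z)‖ := by
    rw [← norm_mul, ← norm_mul]; ring_nf
  rw [e₁, e₂]
  have t₁ := norm_add_le (h z * g z) (z * (deriv h z * g z))
  have t₂ := norm_add_le (h z * g z) (z * (h z * deriv g z))
  rw [norm_mul z] at t₁ t₂
  have := hΛ z hz
  nlinarith [norm_nonneg z, norm_nonneg (deriv h z * g z), norm_nonneg (h z * deriv g z)]

theorem ofReal_norm_sq_mul_mul_conj (z a b : ℂ) :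
    (‖z‖ : ℂ) ^ 2 * (a * conj b) = z * a * conj (z * b) := by
  rw [← mul_conj', map_mul]
  ring

theorem norm_sq_mul_mul_conj_sub_le {h g : ℂ → ℂ} {Λ r : ℝ}
    (hh : AnalyticOnNhd ℂ h (ball 0 1)) (hg : AnalyticOnNhd ℂ g (ball 0 1)) (hh0 : h 0 = 0)
    (hΛ : ∀ z ∈ ball (0 : ℂ) 1, ‖deriv h z * g z‖ + ‖h z * deriv g z‖ ≤ Λ) (hr : r ≤ 1)
    {z₁ z₂ : ℂ} (hz₁ : z₁ ∈ ball (0 : ℂ) r) (hz₂ : z₂ ∈ ball (0 : ℂ) r) :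
    ‖(‖z₂‖ : ℂ) ^ 2 * (h z₂ * conj (g z₂)) - (‖z₁‖ : ℂ) ^ 2 * (h z₁ * conj (g z₁))‖ ≤
      3 * r ^ 2 * Λ * ‖z₂ - z₁‖ := by
  have hsub : ball (0 : ℂ) r ⊆ ball 0 1 := ball_subset_ball hr
  have hΛ0 : 0 ≤ Λ := (by positivity : (0 : ℝ) ≤ _).trans (hΛ 0 (mem_ball_self one_pos))
  simp only [ofReal_norm_sq_mul_mul_conj]
  refine norm_mul_conj_sub_le (convex_ball 0 r)
    (fun z hz => differentiableAt_id.mul (hh z (hsub hz)).differentiableAt)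
    (fun z hz => differentiableAt_id.mul (hg z (hsub hz)).differentiableAt)
    (fun z hz => (norm_deriv_mul_id_le hh hg hh0 hΛ (hsub hz)).trans ?_) hz₁ hz₂
  have : ‖z‖ ^ 2 ≤ r ^ 2 := pow_le_pow_left₀ (norm_nonneg z) (mem_ball_zero_iff.1 hz).le 2
  nlinarith

theorem stmt_6_general (h₁ g₁ h₂ g₂ : ℂ → ℂ) (Λ₁ Λ₂ : ℝ)
    (hh₁ : AnalyticOnNhd ℂ h₁ (ball 0 1)) (hg₁ : AnalyticOnNhd ℂ g₁ (ball 0 1))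
    (hh₂ : AnalyticOnNhd ℂ h₂ (ball 0 1)) (hg₂ : AnalyticOnNhd ℂ g₂ (ball 0 1))
    (hh₁0 : h₁ 0 = 0)
    (F : ℂ → ℂ)
    (hF : ∀ z, F z = (‖z‖ : ℂ) ^ 2 * (h₁ z * (starRingEnd ℂ) (g₁ z)) +
      (h₂ z + (starRingEnd ℂ) (g₂ z)))
    (hlam : |‖deriv h₂ 0‖ - ‖deriv g₂ 0‖| = 1)
    (hK : ∀ z ∈ ball (0 : ℂ) 1,
      ‖deriv h₂ z‖ + ‖deriv g₂ z‖ < Λ₁)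
    (hL : ∀ z ∈ ball (0 : ℂ) 1,
      ‖deriv h₁ z * g₁ z‖ + ‖h₁ z * deriv g₁ z‖ ≤ Λ₂) :
    ∀ r ∈ Set.Ioo (0 : ℝ) 1, ∀ z₁ ∈ ball (0 : ℂ) r, ∀ z₂ ∈ ball (0 : ℂ) r,
      ‖F z₂ - F z₁‖ ≥
        ‖z₂ - z₁‖ * (Λ₁ * (1 - Λ₁ * r) / (Λ₁ - r) - 3 * r ^ 2 * Λ₂) := by
  intro r ⟨_, hr1⟩ z₁ hz₁ z₂ hz₂
  have hKd := mul_norm_sub_le_norm_sub_add_conj hh₂ hg₂ hK hlam.ge hr1.le hz₁ hz₂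
  have hGd := norm_sq_mul_mul_conj_sub_le hh₁ hg₁ hh₁0 hL hr1.le hz₁ hz₂
  set ΔG := (‖z₂‖ : ℂ) ^ 2 * (h₁ z₂ * conj (g₁ z₂)) - (‖z₁‖ : ℂ) ^ 2 * (h₁ z₁ * conj (g₁ z₁))
  have hsplit : F z₂ - F z₁ - ΔG = h₂ z₂ + conj (g₂ z₂) - (h₂ z₁ + conj (g₂ z₁)) := by
    rw [hF, hF]; ring
  have htri := norm_sub_le (F z₂ - F z₁) ΔG
  rw [hsplit] at htri
  rw [ge_iff_le, mul_sub]
  linarith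

/-- Distortion lower bound for `F(z) = |z|² L(z) + K(z)` with logharmonic `L`
and harmonic `K` of bounded length distortion. -/
theorem stmt_6 (h₁ g₁ h₂ g₂ : ℂ → ℂ) (Λ₁ Λ₂ : ℝ)
    (hh₁ : AnalyticOnNhd ℂ h₁ (ball 0 1)) (hg₁ : AnalyticOnNhd ℂ g₁ (ball 0 1))
    (hh₂ : AnalyticOnNhd ℂ h₂ (ball 0 1)) (hg₂ : AnalyticOnNhd ℂ g₂ (ball 0 1))
    (hh₁0 : h₁ 0 = 0)
    (F : ℂ → ℂ)
    (hF : ∀ z, F z = (‖z‖ : ℂ) ^ 2 * (h₁ z * (starRingEnd ℂ) (g₁ z)) +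
      (h₂ z + (starRingEnd ℂ) (g₂ z)))
    (hF0 : F 0 = 0)
    (hlam : |‖deriv h₂ 0‖ - ‖deriv g₂ 0‖| = 1)
    (hΛ₁ : Λ₁ > 1)
    (hK : ∀ z ∈ ball (0 : ℂ) 1,
      ‖deriv h₂ z‖ + ‖deriv g₂ z‖ < Λ₁)
    (hL : ∀ z ∈ ball (0 : ℂ) 1,
      ‖deriv h₁ z * g₁ z‖ + ‖h₁ z * deriv g₁ z‖ ≤ Λ₂) :
    ∀ r ∈ Set.Ioo (0 : ℝ) 1, ∀ z₁ ∈ ball (0 : ℂ) r, ∀ z₂ ∈ ball (0 : ℂ) r,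
      ‖F z₂ - F z₁‖ ≥
        ‖z₂ - z₁‖ * (Λ₁ * (1 - Λ₁ * r) / (Λ₁ - r) - 3 * r ^ 2 * Λ₂) :=
  stmt_6_general h₁ g₁ h₂ g₂ Λ₁ Λ₂ hh₁ hg₁ hh₂ hg₂ hh₁0 F hF hlam hK hL
end

section
/- Let Λ₁ > 1 and Λ₂ ≥ 0 be real numbers, and define g₁(r) = Λ₁·(1 − Λ₁ r)/(Λ₁ − r) − 3 r² Λ₂ for r ∈ [0,1]. Then g₁ is strictly decreasing on [0,1], and there exists a unique r₁ ∈ (0, 1/Λ₁] with g₁(r₁) = 0. -/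
open Set

/-!
The Möbius part `Λ₁(1 − Λ₁ r)/(Λ₁ − r)` has pole `Λ₁ > 1` and determinant `Λ₁(1 − Λ₁²) < 0`, so it
decreases strictly on `[0, 1]`, while `3 r² Λ₂` increases there; hence `g₁` decreases strictly.
Since `g₁ 0 = 1 > 0` and `g₁ (1/Λ₁) = −3Λ₂/Λ₁² ≤ 0`, the intermediate value theorem gives a zero
in `(0, 1/Λ₁]`, unique by strict monotonicity.
-/

theorem StrictAntiOn.existsUnique_mem_Ioc_eq {α δ : Type*} [ConditionallyCompleteLinearOrder α]
    [TopologicalSpace α] [OrderTopology α] [DenselyOrdered α] [LinearOrder δ]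
    [TopologicalSpace δ] [OrderClosedTopology δ] {f : α → δ} {a b : α} {y : δ}
    (hf : StrictAntiOn f (Icc a b)) (hab : a ≤ b) (hcont : ContinuousOn f (Icc a b))
    (hb : f b ≤ y) (ha : y < f a) :
    ∃! x, x ∈ Ioc a b ∧ f x = y := by
  obtain ⟨x, hx, hfx⟩ := intermediate_value_Ioc' hab hcont ⟨hb, ha⟩
  exact ⟨x, ⟨hx, hfx⟩, fun x' ⟨hx', hfx'⟩ =>
    hf.injOn (Ioc_subset_Icc_self hx') (Ioc_subset_Icc_self hx) (hfx'.trans hfx.symm)⟩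

theorem strictAntiOn_mul_one_sub_mul_div_sub {Λ : ℝ} (hΛ : 1 < Λ) :
    StrictAntiOn (fun r : ℝ => Λ * (1 - Λ * r) / (Λ - r)) (Iio Λ) := by
  intro a ha b hb hab
  rw [div_lt_div_iff₀ (sub_pos.2 hb) (sub_pos.2 ha)]
  have hdet : 0 < Λ * (b - a) * (Λ ^ 2 - 1) :=
    mul_pos (mul_pos (by linarith) (sub_pos.2 hab)) (by nlinarith)
  linarith

/-- The function `g₁` of the statement. -/
noncomputable def univalenceRadiusAux (Λ₁ Λ₂ r : ℝ) : ℝ :=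
  Λ₁ * (1 - Λ₁ * r) / (Λ₁ - r) - 3 * r ^ 2 * Λ₂

section

variable {Λ₁ Λ₂ : ℝ}

theorem strictAntiOn_univalenceRadiusAux (hΛ₁ : 1 < Λ₁) (hΛ₂ : 0 ≤ Λ₂) :
    StrictAntiOn (univalenceRadiusAux Λ₁ Λ₂) (Icc 0 1) := by
  have hmobius := (strictAntiOn_mul_one_sub_mul_div_sub hΛ₁).mono
    fun r (hr : r ∈ Icc (0 : ℝ) 1) => hr.2.trans_lt hΛ₁
  have hquad : MonotoneOn (fun r : ℝ => 3 * r ^ 2 * Λ₂) (Icc 0 1) := fun a ha b _ hab => by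
    dsimp only
    gcongr
    exact ha.1
  exact hmobius.add_antitone hquad.neg

theorem continuousOn_univalenceRadiusAux :
    ContinuousOn (univalenceRadiusAux Λ₁ Λ₂) (Iio Λ₁) := by
  unfold univalenceRadiusAux
  refine ContinuousOn.sub (ContinuousOn.div (by fun_prop) (by fun_prop) ?_) (by fun_prop)
  exact fun r hr => (sub_pos.2 hr).ne'

theorem univalenceRadiusAux_zero (hΛ₁ : Λ₁ ≠ 0) : univalenceRadiusAux Λ₁ Λ₂ 0 = 1 := by
  simp [univalenceRadiusAux, hΛ₁]

theorem univalenceRadiusAux_inv_nonpos (hΛ₁ : Λ₁ ≠ 0) (hΛ₂ : 0 ≤ Λ₂) :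
    univalenceRadiusAux Λ₁ Λ₂ (1 / Λ₁) ≤ 0 := by
  simp only [univalenceRadiusAux, mul_one_div_cancel hΛ₁, sub_self, mul_zero, zero_div, zero_sub,
    neg_nonpos]
  positivity

end

/-- The auxiliary function `g₁(r) = Λ₁(1 − Λ₁ r)/(Λ₁ − r) − 3 r² Λ₂` is strictly
decreasing on `[0,1]` and has a unique zero in `(0, 1/Λ₁]`. -/
theorem stmt_7 (Λ₁ Λ₂ : ℝ) (hΛ₁ : Λ₁ > 1) (hΛ₂ : Λ₂ ≥ 0)
    (g₁ : ℝ → ℝ)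
    (hg₁ : ∀ r, g₁ r = Λ₁ * (1 - Λ₁ * r) / (Λ₁ - r) - 3 * r ^ 2 * Λ₂) :
    StrictAntiOn g₁ (Icc 0 1) ∧
      ∃! r₁, r₁ ∈ Ioc 0 (1 / Λ₁) ∧ g₁ r₁ = 0 := by
  obtain rfl : g₁ = univalenceRadiusAux Λ₁ Λ₂ := funext hg₁
  have hΛ₁0 : Λ₁ ≠ 0 := by positivity
  have hinv_lt : 1 / Λ₁ < 1 := (div_lt_one (by positivity)).2 hΛ₁
  have hanti := strictAntiOn_univalenceRadiusAux hΛ₁ hΛ₂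
  refine ⟨hanti, hanti.mono (Icc_subset_Icc_right hinv_lt.le) |>.existsUnique_mem_Ioc_eq
    (by positivity) ?_ (univalenceRadiusAux_inv_nonpos hΛ₁0 hΛ₂) ?_⟩
  · exact continuousOn_univalenceRadiusAux.mono fun r hr => hr.2.trans_lt (hinv_lt.trans hΛ₁)
  · rw [univalenceRadiusAux_zero hΛ₁0]
    exact one_pos
end

section
/- Let Λ₁ > 1 and Λ₂ ≥ 0, and let r₁ ∈ (0, 1/Λ₁] be the unique root of Λ₁·(1 − Λ₁ r)/(Λ₁ − r) − 3 r² Λ₂ = 0. Define F₀(z) = Λ₁² z + (Λ₁³ − Λ₁)·Log(1 − z/Λ₁) − Λ₂ z²·conj(z) for z ∈ 𝔻, where Log is the principal branch of the complex logarithm. Then for every r ∈ (r₁, 1], F₀ is not injective on the disk 𝔻_r = {|z| < r}: there exist distinct real points x₁, x₂ ∈ 𝔻_r with F₀(x₁) = F₀(x₂). -/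
/-!
On the real segment `x < Λ₁` the map `F₀` is real-valued; its derivative there has the sign of
`Λ₁ (1 - Λ₁ x) - 3 Λ₂ x² (Λ₁ - x)`, which by the root equation factors as `(r₁ - x)` times a
factor that is nonnegative for `-r₁ ≤ x ≤ Λ₁`. So `F₀` increases on `[0, r₁]` and decreases
on `[r₁, Λ₁)`; a continuous function with an interior maximum on a segment is not injective
there, and any `r > r₁` leaves room for such a segment inside `𝔻_r`.
-/

open Complex Metric Set

theorem ContinuousOn.not_injOn_Icc_of_le_of_le {α δ : Type*} [ConditionallyCompleteLinearOrder α]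
    [TopologicalSpace α] [OrderTopology α] [DenselyOrdered α] [LinearOrder δ]
    [TopologicalSpace δ] [OrderClosedTopology δ] {f : α → δ} {a b c : α}
    (hab : a < b) (hbc : b < c) (hf : ContinuousOn f (Icc a c))
    (ha : f a ≤ f b) (hc : f c ≤ f b) : ¬ InjOn f (Icc a c) := by
  intro hinj
  have hbmem : b ∈ Icc a c := ⟨hab.le, hbc.le⟩
  rcases hf.strictMonoOn_of_injOn_Icc' (hab.trans hbc).le hinj with hmono | hanti
  · exact (hmono hbmem (right_mem_Icc.2 (hab.trans hbc).le) hbc).not_ge hc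
  · exact (hanti (left_mem_Icc.2 (hab.trans hbc).le) hbmem hab).not_ge ha

noncomputable def realExtremal (Λ₁ Λ₂ x : ℝ) : ℝ :=
  Λ₁ ^ 2 * x + (Λ₁ ^ 3 - Λ₁) * Real.log (1 - x / Λ₁) - Λ₂ * x ^ 3

theorem ofReal_realExtremal (Λ₁ Λ₂ x : ℝ) (hx : x / Λ₁ ≤ 1) :
    (realExtremal Λ₁ Λ₂ x : ℂ) =
      (Λ₁ : ℂ) ^ 2 * x + ((Λ₁ : ℂ) ^ 3 - Λ₁) * log (1 - x / Λ₁)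
        - (Λ₂ : ℂ) * x ^ 2 * (starRingEnd ℂ) x := by
  have hlog : log (1 - x / Λ₁) = ((Real.log (1 - x / Λ₁) : ℝ) : ℂ) := by
    rw [ofReal_log (sub_nonneg.2 hx)]
    push_cast
    rfl
  rw [hlog, conj_ofReal, realExtremal]
  push_cast
  ring

theorem hasDerivAt_realExtremal {Λ₁ : ℝ} (Λ₂ : ℝ) {x : ℝ} (hΛ₁ : Λ₁ ≠ 0) (hx : x ≠ Λ₁) :
    HasDerivAt (realExtremal Λ₁ Λ₂)
      ((Λ₁ * (1 - Λ₁ * x) - 3 * Λ₂ * x ^ 2 * (Λ₁ - x)) / (Λ₁ - x)) x := by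
  have hsub : Λ₁ - x ≠ 0 := sub_ne_zero.2 hx.symm
  have harg : 1 - x / Λ₁ ≠ 0 := by
    rw [one_sub_div hΛ₁]
    exact div_ne_zero hsub hΛ₁
  have hlog : HasDerivAt (fun y => Real.log (1 - y / Λ₁)) (-(1 / Λ₁) / (1 - x / Λ₁)) x := by
    refine HasDerivAt.log ?_ harg
    simpa using ((hasDerivAt_id x).div_const Λ₁).const_sub 1
  refine ((((hasDerivAt_id x).const_mul (Λ₁ ^ 2)).add (hlog.const_mul (Λ₁ ^ 3 - Λ₁))).sub
    ((hasDerivAt_pow 3 x).const_mul Λ₂)).congr_deriv ?_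
  field_simp
  ring

theorem continuousOn_realExtremal {Λ₁ : ℝ} (Λ₂ : ℝ) (hΛ₁ : Λ₁ ≠ 0) :
    ContinuousOn (realExtremal Λ₁ Λ₂) {Λ₁}ᶜ :=
  fun _ hx => (hasDerivAt_realExtremal Λ₂ hΛ₁ hx).continuousAt.continuousWithinAt

section RootEquation

variable {Λ₁ Λ₂ r₁ : ℝ} (hroot : Λ₁ * (1 - Λ₁ * r₁) = 3 * Λ₂ * r₁ ^ 2 * (Λ₁ - r₁))
include hroot

theorem root_factor (x : ℝ) :
    Λ₁ * (1 - Λ₁ * x) - 3 * Λ₂ * x ^ 2 * (Λ₁ - x)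
      = (r₁ - x) * (Λ₁ ^ 2 - 3 * Λ₂ * r₁ ^ 2 + 3 * Λ₂ * (r₁ + x) * (Λ₁ - x)) := by
  linear_combination hroot

theorem cofactor_nonneg (hΛ₁ : 1 ≤ Λ₁) (hΛ₂ : 0 ≤ Λ₂) (hr₁ : r₁ < Λ₁) {x : ℝ}
    (hx₀ : -r₁ ≤ x) (hx₁ : x ≤ Λ₁) :
    0 ≤ Λ₁ ^ 2 - 3 * Λ₂ * r₁ ^ 2 + 3 * Λ₂ * (r₁ + x) * (Λ₁ - x) := by
  have hconst : 3 * Λ₂ * r₁ ^ 2 ≤ Λ₁ ^ 2 := by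
    -- `3 Λ₂ r₁² (Λ₁ - r₁) = Λ₁ - Λ₁² r₁ ≤ Λ₁³ - Λ₁² r₁` since `Λ₁ ≥ 1`
    refine le_of_mul_le_mul_right ?_ (sub_pos.2 hr₁)
    nlinarith
  have := mul_nonneg (mul_nonneg (by norm_num : (0 : ℝ) ≤ 3) hΛ₂)
    (mul_nonneg (neg_le_iff_add_nonneg.1 hx₀) (sub_nonneg.2 hx₁))
  nlinarith

theorem hasDerivAt_realExtremal_of_root (hΛ₁ : Λ₁ ≠ 0) {x : ℝ} (hx : x ≠ Λ₁) :
    HasDerivAt (realExtremal Λ₁ Λ₂)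
      ((r₁ - x) * (Λ₁ ^ 2 - 3 * Λ₂ * r₁ ^ 2 + 3 * Λ₂ * (r₁ + x) * (Λ₁ - x)) / (Λ₁ - x)) x := by
  rw [← root_factor hroot]
  exact hasDerivAt_realExtremal Λ₂ hΛ₁ hx

variable (hΛ₁ : 1 ≤ Λ₁) (hΛ₂ : 0 ≤ Λ₂)
include hΛ₁ hΛ₂

theorem monotoneOn_realExtremal (hr₁ : r₁ < Λ₁) :
    MonotoneOn (realExtremal Λ₁ Λ₂) (Icc (-r₁) r₁) := by
  have hΛ₁₀ : Λ₁ ≠ 0 := by positivity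
  refine monotoneOn_of_hasDerivWithinAt_nonneg (convex_Icc _ _)
    (f' := fun x => (r₁ - x) * (Λ₁ ^ 2 - 3 * Λ₂ * r₁ ^ 2 + 3 * Λ₂ * (r₁ + x) * (Λ₁ - x)) / (Λ₁ - x))
    ((continuousOn_realExtremal Λ₂ hΛ₁₀).mono fun x hx => (hx.2.trans_lt hr₁).ne)
    (fun x hx => ?_) fun x hx => ?_
  all_goals rw [interior_Icc] at hx
  · exact (hasDerivAt_realExtremal_of_root hroot hΛ₁₀ (hx.2.trans hr₁).ne).hasDerivWithinAt
  · exact div_nonneg (mul_nonneg (sub_nonneg.2 hx.2.le)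
      (cofactor_nonneg hroot hΛ₁ hΛ₂ hr₁ hx.1.le (hx.2.trans hr₁).le))
      (sub_nonneg.2 (hx.2.trans hr₁).le)

theorem antitoneOn_realExtremal (hr₁ : 0 ≤ r₁) {c : ℝ} (hc : c < Λ₁) :
    AntitoneOn (realExtremal Λ₁ Λ₂) (Icc r₁ c) := by
  have hΛ₁₀ : Λ₁ ≠ 0 := by positivity
  refine antitoneOn_of_hasDerivWithinAt_nonpos (convex_Icc _ _)
    (f' := fun x => (r₁ - x) * (Λ₁ ^ 2 - 3 * Λ₂ * r₁ ^ 2 + 3 * Λ₂ * (r₁ + x) * (Λ₁ - x)) / (Λ₁ - x))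
    ((continuousOn_realExtremal Λ₂ hΛ₁₀).mono fun x hx => (hx.2.trans_lt hc).ne)
    (fun x hx => ?_) fun x hx => ?_
  all_goals rw [interior_Icc] at hx
  · exact (hasDerivAt_realExtremal_of_root hroot hΛ₁₀ (hx.2.trans hc).ne).hasDerivWithinAt
  · exact div_nonpos_of_nonpos_of_nonneg (mul_nonpos_of_nonpos_of_nonneg (sub_nonpos.2 hx.1.le)
      (cofactor_nonneg hroot hΛ₁ hΛ₂ ((hx.2.trans hc).trans' hx.1) (by linarith [hx.1])
      (hx.2.trans hc).le)) (sub_nonneg.2 (hx.2.trans hc).le)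

end RootEquation

/-- Sharpness of the univalence radius `r₁`: the extremal map
`F₀(z) = Λ₁² z + (Λ₁³ − Λ₁) Log(1 − z/Λ₁) − Λ₂ z² z̄` fails to be injective on
every disk `𝔻_r` with `r₁ < r ≤ 1`. -/
theorem stmt_10 (Λ₁ Λ₂ : ℝ) (hΛ₁ : Λ₁ > 1) (hΛ₂ : Λ₂ ≥ 0)
    (r₁ : ℝ) (hr₁ : r₁ ∈ Set.Ioc 0 (1 / Λ₁))
    (hroot : Λ₁ * (1 - Λ₁ * r₁) / (Λ₁ - r₁) - 3 * r₁ ^ 2 * Λ₂ = 0)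
    (F₀ : ℂ → ℂ)
    (hF₀ : ∀ z, F₀ z = (Λ₁ : ℂ) ^ 2 * z + ((Λ₁ : ℂ) ^ 3 - Λ₁) *
      Complex.log (1 - z / Λ₁) - (Λ₂ : ℂ) * z ^ 2 * (starRingEnd ℂ) z) :
    ∀ r ∈ Set.Ioc r₁ 1, ∃ x₁ x₂ : ℝ, x₁ ≠ x₂ ∧
      (x₁ : ℂ) ∈ ball (0 : ℂ) r ∧ (x₂ : ℂ) ∈ ball (0 : ℂ) r ∧
      F₀ x₁ = F₀ x₂ := by
  rintro r ⟨hr₁r, hr1⟩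
  obtain ⟨c, hr₁c, hcr⟩ := exists_between hr₁r
  have hr₁Λ₁ : r₁ < Λ₁ := by linarith
  have hroot' : Λ₁ * (1 - Λ₁ * r₁) = 3 * Λ₂ * r₁ ^ 2 * (Λ₁ - r₁) := by
    rw [sub_eq_zero, div_eq_iff (sub_ne_zero.2 hr₁Λ₁.ne')] at hroot
    linarith
  have hmono := monotoneOn_realExtremal hroot' hΛ₁.le hΛ₂ hr₁Λ₁
  have hanti := antitoneOn_realExtremal hroot' hΛ₁.le hΛ₂ hr₁.1.le (hcr.trans_le hr1 |>.trans hΛ₁)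
  have hcont : ContinuousOn (realExtremal Λ₁ Λ₂) (Icc 0 c) :=
    (continuousOn_realExtremal Λ₂ (by positivity)).mono fun x hx =>
      (show x ≠ Λ₁ by linarith [hx.2])
  have hnot := hcont.not_injOn_Icc_of_le_of_le hr₁.1 hr₁c
    (hmono ⟨by linarith [hr₁.1], hr₁.1.le⟩ ⟨by linarith [hr₁.1], le_rfl⟩ hr₁.1.le)
    (hanti ⟨le_rfl, hr₁c.le⟩ ⟨hr₁c.le, le_rfl⟩ hr₁c.le)
  simp only [InjOn, not_forall] at hnot
  obtain ⟨x₁, hx₁, x₂, hx₂, hF, hne⟩ := hnot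
  have hball : ∀ x ∈ Icc 0 c, (x : ℂ) ∈ ball (0 : ℂ) r := fun x hx => by
    rw [mem_ball_zero_iff, norm_real, Real.norm_of_nonneg hx.1]
    linarith [hx.2]
  have hF₀_real : ∀ x ∈ Icc 0 c, F₀ x = realExtremal Λ₁ Λ₂ x := fun x hx => by
    rw [hF₀, ofReal_realExtremal _ _ _ ((div_le_one (by linarith)).2 (by linarith [hx.2]))]
  exact ⟨x₁, x₂, hne, hball x₁ hx₁, hball x₂ hx₂, by rw [hF₀_real x₁ hx₁, hF₀_real x₂ hx₂, hF]⟩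
end

section
/- Let F(z) = |z|²·L(z) + K(z) on the unit disk 𝔻, where L(z) = h₁(z)·conj(g₁(z)) is logharmonic with h₁, g₁ analytic on 𝔻 and h₁(0) = 0, and K(z) = h₂(z) + conj(g₂(z)) is harmonic with h₂, g₂ analytic on 𝔻. Suppose F(0) = 0, λ_F(0) = ||h₂'(0)| − |g₂'(0)|| = 1, Λ_K(z) = |h₂'(z)| + |g₂'(z)| ≤ 1 for all z ∈ 𝔻, and Λ_L(z) = |h₁'(z)·g₁(z)| + |h₁(z)·g₁'(z)| ≤ Λ₂ for all z ∈ 𝔻. Set r₁' = 1 if 3Λ₂ ≤ 1 and r₁' = 1/√(3Λ₂) if 3Λ₂ > 1, and ρ₁' = r₁' − Λ₂·(r₁')³. Then the image F(𝔻_{r₁'}) contains the disk 𝔻_{ρ₁'} = {w ∈ ℂ : |w| < ρ₁'}. -/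
open Complex Metric Set Filter Topology ComplexConjugate

/-!
The hypotheses on `K` make it an affine isometry: `|‖h₂'(0)‖ - ‖g₂'(0)‖| = 1` and `Λ_K ≤ 1` force
one of `‖h₂'‖`, `‖g₂'‖` to attain its maximum `1` at `0`, so by the maximum modulus principle one of
`h₂, g₂` is `z ↦ c z + const` with `‖c‖ = 1` and the other is constant.
The remaining term `G(z) = |z|² L(z) = (z h₁(z)) · conj (z g₁(z))` satisfies `‖G z‖ ≤ Λ₂ ‖z‖³` and
is `3 Λ₂ r²`-Lipschitz on the closed disk of radius `r`. Hence for `r < r₁'` the equation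
`F z = w`, i.e. `z = K⁻¹ (w - G z)`, is a fixed point problem for a contraction of that disk as soon
as `‖w‖ + Λ₂ r³ ≤ r`, and every `‖w‖ < r₁' - Λ₂ r₁'³` satisfies this for some `r < r₁'`.
-/

theorem Convex.norm_mul_conj_sub_le {s : Set ℂ} (hs : Convex ℝ s) {a b : ℂ → ℂ}
    (ha : ∀ z ∈ s, DifferentiableAt ℂ a z) (hb : ∀ z ∈ s, DifferentiableAt ℂ b z) {C : ℝ}
    (hC : ∀ z ∈ s, ‖deriv a z * b z‖ + ‖a z * deriv b z‖ ≤ C) {x y : ℂ} (hx : x ∈ s)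
    (hy : y ∈ s) : ‖a x * conj (b x) - a y * conj (b y)‖ ≤ C * ‖x - y‖ := by
  have hD z (hz : z ∈ s) := ((ha z hz).hasDerivAt.hasFDerivAt.restrictScalars ℝ).mul
    ((hb z hz).hasDerivAt.hasFDerivAt.restrictScalars ℝ).star
  refine hs.norm_image_sub_le_of_norm_hasFDerivWithin_le (fun z hz => (hD z hz).hasFDerivWithinAt)
    (fun z hz => ContinuousLinearMap.opNorm_le_bound _ ?_ fun v => ?_) hy hx
  · exact (add_nonneg (norm_nonneg _) (norm_nonneg _)).trans (hC z hz)
  · refine le_trans ?_ (mul_le_mul_of_nonneg_right (hC z hz) (norm_nonneg v))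
    refine (norm_add_le _ _).trans_eq ?_
    simp
    ring

theorem Convex.norm_mul_le_of_apply_zero {s : Set ℂ} (hs : Convex ℝ s) (hs₀ : (0 : ℂ) ∈ s)
    {a b : ℂ → ℂ} (ha : ∀ z ∈ s, DifferentiableAt ℂ a z) (hb : ∀ z ∈ s, DifferentiableAt ℂ b z)
    (ha₀ : a 0 = 0) {C : ℝ} (hC : ∀ z ∈ s, ‖deriv a z * b z‖ + ‖a z * deriv b z‖ ≤ C) {z : ℂ}
    (hz : z ∈ s) : ‖a z * b z‖ ≤ C * ‖z‖ := by
  simpa [ha₀] using hs.norm_image_sub_le_of_norm_hasDerivWithin_le (f := fun w => a w * b w)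
    (fun w hw => ((ha w hw).hasDerivAt.mul (hb w hw).hasDerivAt).hasDerivWithinAt)
    (fun w hw => (norm_add_le _ _).trans (hC w hw)) hs₀ hz

noncomputable def normSqMulMulConj (h g : ℂ → ℂ) (z : ℂ) : ℂ := (‖z‖ : ℂ) ^ 2 * (h z * conj (g z))

theorem normSqMulMulConj_eq (h g : ℂ → ℂ) (z : ℂ) :
    normSqMulMulConj h g z = z * h z * conj (z * g z) := by
  rw [normSqMulMulConj, ← ofReal_pow, Complex.sq_norm, ← mul_conj, map_mul]
  ring

theorem norm_normSqMulMulConj_le {s : Set ℂ} (hs : Convex ℝ s) (hs₀ : (0 : ℂ) ∈ s)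
    {h g : ℂ → ℂ} (hh : ∀ z ∈ s, DifferentiableAt ℂ h z) (hg : ∀ z ∈ s, DifferentiableAt ℂ g z)
    (hh₀ : h 0 = 0) {C : ℝ} (hC : ∀ z ∈ s, ‖deriv h z * g z‖ + ‖h z * deriv g z‖ ≤ C) {z : ℂ}
    (hz : z ∈ s) : ‖normSqMulMulConj h g z‖ ≤ C * ‖z‖ ^ 3 := by
  have := hs.norm_mul_le_of_apply_zero hs₀ hh hg hh₀ hC hz
  calc ‖normSqMulMulConj h g z‖ = ‖z‖ ^ 2 * ‖h z * g z‖ := by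
        simp [normSqMulMulConj]
    _ ≤ ‖z‖ ^ 2 * (C * ‖z‖) := by gcongr
    _ = C * ‖z‖ ^ 3 := by ring

theorem norm_normSqMulMulConj_sub_le {h g : ℂ → ℂ} {r C : ℝ}
    (hh : ∀ z ∈ closedBall (0 : ℂ) r, DifferentiableAt ℂ h z)
    (hg : ∀ z ∈ closedBall (0 : ℂ) r, DifferentiableAt ℂ g z) (hh₀ : h 0 = 0)
    (hC : ∀ z ∈ closedBall (0 : ℂ) r, ‖deriv h z * g z‖ + ‖h z * deriv g z‖ ≤ C) {x y : ℂ}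
    (hx : x ∈ closedBall (0 : ℂ) r) (hy : y ∈ closedBall (0 : ℂ) r) :
    ‖normSqMulMulConj h g x - normSqMulMulConj h g y‖ ≤ 3 * C * r ^ 2 * ‖x - y‖ := by
  have hs₀ : (0 : ℂ) ∈ closedBall (0 : ℂ) r := mem_closedBall_self (nonneg_of_mem_closedBall hx)
  have hC₀ : 0 ≤ C := (add_nonneg (norm_nonneg _) (norm_nonneg _)).trans (hC 0 hs₀)
  have hasDerivAt_id_mul {f : ℂ → ℂ} {z : ℂ} (hf : DifferentiableAt ℂ f z) :
      HasDerivAt (fun w => w * f w) (f z + z * deriv f z) z :=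
    ((hasDerivAt_id' z).mul hf.hasDerivAt).congr_deriv (by simp)
  simp only [normSqMulMulConj_eq]
  refine (convex_closedBall 0 r).norm_mul_conj_sub_le
    (fun z hz => (hasDerivAt_id_mul (hh z hz)).differentiableAt)
    (fun z hz => (hasDerivAt_id_mul (hg z hz)).differentiableAt) (fun z hz => ?_) hx hy
  have hzr : ‖z‖ ≤ r := by simpa using hz
  have hhg := (convex_closedBall 0 r).norm_mul_le_of_apply_zero hs₀ hh hg hh₀ hC hz
  rw [(hasDerivAt_id_mul (hh z hz)).deriv, (hasDerivAt_id_mul (hg z hz)).deriv]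
  calc ‖(h z + z * deriv h z) * (z * g z)‖ + ‖z * h z * (g z + z * deriv g z)‖
      = ‖z * (h z * g z) + z ^ 2 * (deriv h z * g z)‖
        + ‖z * (h z * g z) + z ^ 2 * (h z * deriv g z)‖ := by ring_nf
    _ ≤ 2 * ‖z‖ * ‖h z * g z‖ + ‖z‖ ^ 2 * (‖deriv h z * g z‖ + ‖h z * deriv g z‖) := by
        refine (add_le_add (norm_add_le _ _) (norm_add_le _ _)).trans_eq ?_
        simp only [norm_mul, norm_pow]
        ring
    _ ≤ 2 * ‖z‖ * (C * ‖z‖) + ‖z‖ ^ 2 * C := by gcongr; exact hC z hz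
    _ ≤ 3 * C * r ^ 2 := by
        nlinarith [mul_le_mul_of_nonneg_left (pow_le_pow_left₀ (norm_nonneg z) hzr 2) hC₀]

section MaximumModulus

variable {U : Set ℂ} {f g : ℂ → ℂ} {z₀ : ℂ}

theorem eqOn_deriv_of_norm_deriv_add_le (hU : IsOpen U) (hU' : IsPreconnected U)
    (hf : DifferentiableOn ℂ f U) (hz₀ : z₀ ∈ U)
    (hfg : ∀ z ∈ U, ‖deriv f z‖ + ‖deriv g z‖ ≤ ‖deriv f z₀‖) :
    EqOn (deriv f) (fun _ => deriv f z₀) U ∧ EqOn (deriv g) 0 U := by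
  have hmax : IsMaxOn (norm ∘ deriv f) U z₀ := fun z hz =>
    (le_add_of_nonneg_right (norm_nonneg _)).trans (hfg z hz)
  have hf' : EqOn (deriv f) (fun _ => deriv f z₀) U :=
    eqOn_of_isPreconnected_of_isMaxOn_norm hU' hU (hf.deriv hU) hz₀ hmax
  refine ⟨hf', fun z hz => norm_le_zero_iff.mp ?_⟩
  simpa [hf' hz] using hfg z hz

theorem eqOn_affine_of_norm_deriv_add_le (hU : IsOpen U) (hU' : IsPreconnected U)
    (hf : DifferentiableOn ℂ f U) (hg : DifferentiableOn ℂ g U) (hz₀ : z₀ ∈ U)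
    (hfg : ∀ z ∈ U, ‖deriv f z‖ + ‖deriv g z‖ ≤ ‖deriv f z₀‖) :
    EqOn f (fun z => f z₀ + deriv f z₀ * (z - z₀)) U ∧ EqOn g (fun _ => g z₀) U := by
  obtain ⟨hf', hg'⟩ := eqOn_deriv_of_norm_deriv_add_le hU hU' hf hz₀ hfg
  refine ⟨hU.eqOn_of_deriv_eq hU' hf (by fun_prop) (fun z hz => ?_) hz₀ (by simp),
    hU.eqOn_of_deriv_eq hU' hg (by fun_prop) (fun z hz => ?_) hz₀ rfl⟩
  · simp [hf' hz]
  · simp [hg' hz]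

end MaximumModulus

theorem exists_linearIsometryEquiv_of_norm_deriv_add_le {U : Set ℂ} (hU : IsOpen U)
    (hU' : IsPreconnected U) {h g : ℂ → ℂ} (hh : DifferentiableOn ℂ h U)
    (hg : DifferentiableOn ℂ g U) {z₀ : ℂ} (hz₀ : z₀ ∈ U)
    (hlam : |‖deriv h z₀‖ - ‖deriv g z₀‖| = 1)
    (hK : ∀ z ∈ U, ‖deriv h z‖ + ‖deriv g z‖ ≤ 1) :
    ∃ A : ℂ ≃ₗᵢ[ℝ] ℂ, ∀ z ∈ U, h z + conj (g z) = h z₀ + conj (g z₀) + A (z - z₀) := by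
  have hK₀ := hK z₀ hz₀
  rcases (abs_eq zero_le_one).mp hlam with hlam | hlam
  · have hh₀ : ‖deriv h z₀‖ = 1 := by linarith [norm_nonneg (deriv g z₀)]
    obtain ⟨hh', hg'⟩ := eqOn_affine_of_norm_deriv_add_le hU hU' hh hg hz₀ (hh₀ ▸ hK)
    obtain ⟨u, hu⟩ : ∃ u : Circle, (u : ℂ) = deriv h z₀ :=
      ⟨⟨_, mem_sphere_zero_iff_norm.mpr hh₀⟩, rfl⟩
    refine ⟨rotation u, fun z hz => ?_⟩
    rw [hh' hz, hg' hz, rotation_apply, hu]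
    ring
  · have hg₀ : ‖deriv g z₀‖ = 1 := by linarith [norm_nonneg (deriv h z₀)]
    obtain ⟨hg', hh'⟩ := eqOn_affine_of_norm_deriv_add_le hU hU' hg hh hz₀
      (fun z hz => (add_comm _ _).trans_le (hg₀ ▸ hK z hz))
    obtain ⟨u, hu⟩ : ∃ u : Circle, (u : ℂ) = deriv g z₀ :=
      ⟨⟨_, mem_sphere_zero_iff_norm.mpr hg₀⟩, rfl⟩
    refine ⟨(rotation u).trans conjLIE, fun z hz => ?_⟩
    rw [hh' hz, hg' hz, LinearIsometryEquiv.trans_apply, rotation_apply, hu, conjLIE_apply,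
      map_add]
    ring

theorem LinearIsometryEquiv.exists_mem_closedBall_apply_add_eq {E : Type*}
    [NormedAddCommGroup E] [NormedSpace ℝ E] [CompleteSpace E] (A : E ≃ₗᵢ[ℝ] E) {G : E → E}
    {r k M : ℝ} (hr : 0 ≤ r) (hk₀ : 0 ≤ k) (hk : k < 1)
    (hG : ∀ x ∈ closedBall (0 : E) r, ∀ y ∈ closedBall (0 : E) r, ‖G x - G y‖ ≤ k * ‖x - y‖)
    (hM : ∀ z ∈ closedBall (0 : E) r, ‖G z‖ ≤ M) {w : E} (hw : ‖w‖ + M ≤ r) :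
    ∃ z ∈ closedBall (0 : E) r, A z + G z = w := by
  set T : E → E := fun z => A.symm (w - G z)
  have hT : MapsTo T (closedBall 0 r) (closedBall 0 r) := fun z hz => by
    rw [mem_closedBall_zero_iff, LinearIsometryEquiv.norm_map]
    linarith [norm_sub_le w (G z), hM z hz]
  have hTk : LipschitzOnWith k.toNNReal T (closedBall 0 r) :=
    LipschitzOnWith.of_dist_le_mul fun x hx y hy => by
      rw [Real.coe_toNNReal _ hk₀, dist_eq_norm, dist_eq_norm, ← map_sub,
        LinearIsometryEquiv.norm_map, sub_sub_sub_cancel_left, norm_sub_rev]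
      exact hG x hx y hy
  obtain ⟨z, hz, hTz, -⟩ := ContractingWith.exists_fixedPoint' isClosed_closedBall.isComplete hT
    ⟨Real.toNNReal_lt_one.mpr hk, hTk.mapsToRestrict hT⟩ (mem_closedBall_self hr)
    (edist_ne_top _ _)
  refine ⟨z, hz, ?_⟩
  rw [← A.symm_apply_eq.mp hTz, sub_add_cancel]

noncomputable def landauRadius (Λ : ℝ) : ℝ := if 3 * Λ ≤ 1 then 1 else 1 / √(3 * Λ)

theorem landauRadius_le_one (Λ : ℝ) : landauRadius Λ ≤ 1 := by
  unfold landauRadius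
  split_ifs with h
  · exact le_rfl
  · rw [div_le_one (Real.sqrt_pos.mpr (by linarith)), Real.one_le_sqrt]
    linarith

theorem mul_landauRadius_sq_le_one (Λ : ℝ) : 3 * Λ * landauRadius Λ ^ 2 ≤ 1 := by
  unfold landauRadius
  split_ifs with h
  · simpa using h
  · rw [div_pow, one_pow, Real.sq_sqrt (by linarith), mul_one_div_cancel (by linarith)]

theorem exists_lt_of_lt_sub_mul_pow_three {Λ R t : ℝ} (hΛ : 0 ≤ Λ) (hR : 3 * Λ * R ^ 2 ≤ 1)
    (ht₀ : 0 ≤ t) (ht : t < R - Λ * R ^ 3) :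
    ∃ r, 0 ≤ r ∧ r < R ∧ 3 * Λ * r ^ 2 < 1 ∧ t + Λ * r ^ 3 ≤ r := by
  have hR₀ : 0 < R := by
    by_contra! hR₀
    nlinarith [sq_nonneg R]
  have hcont : Continuous fun r : ℝ => r - Λ * r ^ 3 := by fun_prop
  have hnear : ∀ᶠ r in 𝓝[<] R, t < r - Λ * r ^ 3 :=
    nhdsWithin_le_nhds <| (hcont.tendsto R).eventually (lt_mem_nhds ht)
  obtain ⟨r, htr, hr₀, hrR⟩ := (hnear.and (Ioo_mem_nhdsLT hR₀)).exists
  refine ⟨r, hr₀.le, hrR, ?_, by linarith⟩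
  rcases hΛ.eq_or_lt with rfl | hΛ
  · norm_num
  · nlinarith [mul_lt_mul_of_pos_left (mul_self_lt_mul_self hr₀.le hrR) hΛ]

/-- Landau-type theorem in the case `Λ_K ≤ 1`: schlicht disk for
`F(z) = |z|² L(z) + K(z)` on the disk of radius `r₁' = 1` (if `3Λ₂ ≤ 1`) or
`r₁' = 1/√(3Λ₂)` (if `3Λ₂ > 1`). -/
theorem stmt_12 (h₁ g₁ h₂ g₂ : ℂ → ℂ) (Λ₂ : ℝ)
    (hh₁ : AnalyticOnNhd ℂ h₁ (ball 0 1)) (hg₁ : AnalyticOnNhd ℂ g₁ (ball 0 1))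
    (hh₂ : AnalyticOnNhd ℂ h₂ (ball 0 1)) (hg₂ : AnalyticOnNhd ℂ g₂ (ball 0 1))
    (hh₁0 : h₁ 0 = 0)
    (F : ℂ → ℂ)
    (hF : ∀ z, F z = (‖z‖ : ℂ) ^ 2 * (h₁ z * (starRingEnd ℂ) (g₁ z)) +
      (h₂ z + (starRingEnd ℂ) (g₂ z)))
    (hF0 : F 0 = 0)
    (hlam : |‖deriv h₂ 0‖ - ‖deriv g₂ 0‖| = 1)
    (hK : ∀ z ∈ ball (0 : ℂ) 1,
      ‖deriv h₂ z‖ + ‖deriv g₂ z‖ ≤ 1)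
    (hL : ∀ z ∈ ball (0 : ℂ) 1,
      ‖deriv h₁ z * g₁ z‖ + ‖h₁ z * deriv g₁ z‖ ≤ Λ₂)
    (r₁' : ℝ)
    (hr₁' : r₁' = if 3 * Λ₂ ≤ 1 then 1 else 1 / Real.sqrt (3 * Λ₂)) :
    ball (0 : ℂ) (r₁' - Λ₂ * r₁' ^ 3) ⊆ F '' (ball 0 r₁') := by
  change r₁' = landauRadius Λ₂ at hr₁'
  subst hr₁'
  intro w hw
  have hΛ₂ : 0 ≤ Λ₂ :=
    (add_nonneg (norm_nonneg _) (norm_nonneg _)).trans (hL 0 (mem_ball_self one_pos))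
  obtain ⟨A, hA⟩ := exists_linearIsometryEquiv_of_norm_deriv_add_le isOpen_ball
    (convex_ball 0 1).isPreconnected hh₂.differentiableOn hg₂.differentiableOn
    (mem_ball_self one_pos) hlam hK
  have hFA : ∀ z ∈ ball (0 : ℂ) 1, F z = normSqMulMulConj h₁ g₁ z + A z := by
    intro z hz
    have hK₀ : h₂ 0 + conj (g₂ 0) = 0 := by simpa [hF0] using (hF 0).symm
    rw [hF z, hA z hz, hK₀, normSqMulMulConj, sub_zero, zero_add]
  obtain ⟨r, hr₀, hrR, hk, hwr⟩ := exists_lt_of_lt_sub_mul_pow_three hΛ₂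
    (mul_landauRadius_sq_le_one Λ₂) (norm_nonneg w) (mem_ball_zero_iff.mp hw)
  have hsub : closedBall (0 : ℂ) r ⊆ ball 0 (landauRadius Λ₂) := closedBall_subset_ball hrR
  have hsub₁ : closedBall (0 : ℂ) r ⊆ ball 0 1 :=
    hsub.trans (ball_subset_ball (landauRadius_le_one Λ₂))
  have hdiff {f : ℂ → ℂ} (hf : AnalyticOnNhd ℂ f (ball 0 1)) :
      ∀ z ∈ closedBall (0 : ℂ) r, DifferentiableAt ℂ f z :=
    fun z hz => (hf z (hsub₁ hz)).differentiableAt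
  have hL' : ∀ z ∈ closedBall (0 : ℂ) r, ‖deriv h₁ z * g₁ z‖ + ‖h₁ z * deriv g₁ z‖ ≤ Λ₂ :=
    fun z hz => hL z (hsub₁ hz)
  obtain ⟨z, hz, hzw⟩ := A.exists_mem_closedBall_apply_add_eq hr₀ (by positivity) hk
    (fun x hx y hy => norm_normSqMulMulConj_sub_le (hdiff hh₁) (hdiff hg₁) hh₁0 hL' hx hy)
    (fun z hz => (norm_normSqMulMulConj_le (convex_closedBall 0 r) (mem_closedBall_self hr₀)
      (hdiff hh₁) (hdiff hg₁) hh₁0 hL' hz).trans (by gcongr; simpa using hz))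
    (by linarith : ‖w‖ + Λ₂ * r ^ 3 ≤ r)
  exact ⟨z, hsub hz, by rw [hFA z (hsub₁ hz), add_comm, hzw]⟩
end

section
/- Let Λ₂ > 1/3 and define F₁(z) = z − Λ₂ z²·conj(z) for z ∈ 𝔻, and set r₁' = 1/√(3Λ₂). Then for every r ∈ (r₁', 1], F₁ is not injective on the disk 𝔻_r = {|z| < r}: there exist distinct real points x₁, x₂ ∈ 𝔻_r with F₁(x₁) = F₁(x₂). Moreover |F₁(r₁')| = r₁' − Λ₂·(r₁')³. -/
open Complex Metric

/-!
On the real axis `F₁` is the cubic `x ↦ x - Λ₂ x³`, whose derivative vanishes at `r₁'`.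
Since `t - Λ₂ t³ - (s - Λ₂ s³) = (t - s) (1 - Λ₂ (t² + t s + s²))`, any two distinct reals on the
ellipse `t² + t s + s² = 3 r₁'² = 1 / Λ₂` have the same image, and writing `t = p + q`, `s = p - q`
(so that the ellipse becomes `3 p² + q² = 3 r₁'²`) with `q > 0` small gives such a pair inside
any interval `(-r, r)` with `r > r₁'`.
-/

lemma sub_mul_pow_three_eq_of_mul_sq_add_mul_add_sq_eq_one {Λ t s : ℝ}
    (h : Λ * (t ^ 2 + t * s + s ^ 2) = 1) : t - Λ * t ^ 3 = s - Λ * s ^ 3 := by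
  linear_combination (s - t) * h

lemma exists_ne_abs_lt_sq_add_mul_add_sq_eq {a r : ℝ} (ha : 0 < a) (har : a < r) :
    ∃ t s : ℝ, t ≠ s ∧ |t| < r ∧ |s| < r ∧ t ^ 2 + t * s + s ^ 2 = 3 * a ^ 2 := by
  set q := min (r - a) a
  have hq : 0 < q := lt_min (by linarith) ha
  have hqr : q ≤ r - a := min_le_left _ _
  have hqa : q ≤ a := min_le_right _ _
  set p := √(a ^ 2 - q ^ 2 / 3)
  have hp_sq : p ^ 2 = a ^ 2 - q ^ 2 / 3 := Real.sq_sqrt (by nlinarith)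
  have hp : 0 ≤ p := Real.sqrt_nonneg _
  have hpa : p < a := by nlinarith
  refine ⟨p + q, p - q, by linarith, ?_, ?_, by linear_combination 3 * hp_sq⟩
  · rw [abs_lt]; constructor <;> linarith
  · rw [abs_lt]; constructor <;> linarith

/-- Sharpness of the radii in the case `Λ_K ≤ 1`: the extremal map
`F₁(z) = z − Λ₂ z² z̄` is not injective on `𝔻_r` for `r₁' < r ≤ 1`, where
`r₁' = 1/√(3Λ₂)`, and `|F₁(r₁')| = r₁' − Λ₂ (r₁')³`. -/
theorem stmt_13 (Λ₂ : ℝ) (hΛ₂ : Λ₂ > 1 / 3)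
    (F₁ : ℂ → ℂ)
    (hF₁ : ∀ z, F₁ z = z - (Λ₂ : ℂ) * z ^ 2 * (starRingEnd ℂ) z)
    (r₁' : ℝ) (hr₁' : r₁' = 1 / Real.sqrt (3 * Λ₂)) :
    (∀ r ∈ Set.Ioc r₁' 1, ∃ x₁ x₂ : ℝ, x₁ ≠ x₂ ∧
      (x₁ : ℂ) ∈ ball (0 : ℂ) r ∧ (x₂ : ℂ) ∈ ball (0 : ℂ) r ∧
      F₁ x₁ = F₁ x₂) ∧
    ‖F₁ r₁'‖ = r₁' - Λ₂ * r₁' ^ 3 := by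
  have hΛ : 0 < 3 * Λ₂ := by linarith
  have hr₁'_pos : 0 < r₁' := by rw [hr₁']; positivity
  have hcrit : 3 * Λ₂ * r₁' ^ 2 = 1 := by
    rw [hr₁', div_pow, one_pow, Real.sq_sqrt hΛ.le, mul_one_div_cancel hΛ.ne']
  have hF₁_real (x : ℝ) : F₁ x = ((x - Λ₂ * x ^ 3 : ℝ) : ℂ) := by
    rw [hF₁, conj_ofReal]; push_cast; ring
  refine ⟨fun r ⟨hr, _⟩ => ?_, ?_⟩
  · obtain ⟨t, s, hts, ht, hs, hell⟩ := exists_ne_abs_lt_sq_add_mul_add_sq_eq hr₁'_pos hr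
    refine ⟨t, s, hts, by simpa using ht, by simpa using hs, ?_⟩
    have hcubic : t - Λ₂ * t ^ 3 = s - Λ₂ * s ^ 3 :=
      sub_mul_pow_three_eq_of_mul_sq_add_mul_add_sq_eq_one (by linear_combination Λ₂ * hell + hcrit)
    rw [hF₁_real, hF₁_real, hcubic]
  · rw [hF₁_real, norm_real, Real.norm_of_nonneg (by nlinarith)]
end
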